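/- arXiv:2509.05418 — 10 statements merged into one kernel-verified Lean document; each statement's English description precedes it below -/
import Mathlib

section
/- Decay of the residual operator under a mixed logarithmic source condition (Theorem 3.1, abstract semigroup form): There exists a constant C' > 0, depending only on p, p₁, ν, λ, ω, C and E, such that for every w ∈ X the Bochner integral v = (1/(ν−1)!) ∫₀^∞ q^{ν−1} e^{−λq} T_q w dq converges in X, and with u = T_p v one has ‖S_α u‖ ≤ C' ‖w‖ α^p (log(1/α))^{−ν} for all 0 < α < 1. -/
/-!
Write `δ = p₁ - p` and `L = log (1 / α)`, so that `α ^ q = exp (-L q)`. By the semigroup law,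
`S_α T_p v` is the weighted integral of `S_α T_{p+q} w` against `q ^ (ν-1) e^{-λq} / (ν-1)!`.
For `q ≤ δ` the source bound gives `‖S_α T_{p+q}‖ ≤ E α ^ p e^{-Lq}`, contributing
`α ^ p / L ^ ν`; for `q ≥ δ` one factors `T_{p+q} = T_{p₁} T_{q-δ}` and gets
`E C α ^ p₁ e^{ω (q-δ)}`, contributing `α ^ p₁ / (λ - ω) ^ ν`. The surplus factor
`α ^ δ = e^{-δL} ≤ ν! / (δL) ^ ν` turns the second contribution into logarithmic decay as well.
-/

open MeasureTheory Real Set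
open scoped Nat

lemma integrableOn_pow_mul_exp_neg_mul_Ioi (n : ℕ) {b : ℝ} (hb : 0 < b) :
    IntegrableOn (fun q : ℝ => q ^ n * exp (-b * q)) (Ioi 0) := by
  simpa [rpow_natCast] using integrableOn_rpow_mul_exp_neg_mul_rpow
    (neg_one_lt_zero.trans_le n.cast_nonneg) one_pos hb

lemma integral_pow_mul_exp_neg_mul_Ioi (n : ℕ) {b : ℝ} (hb : 0 < b) :
    ∫ q in Ioi (0:ℝ), q ^ n * exp (-b * q) = n ! / b ^ (n + 1) := by
  have h := integral_rpow_mul_exp_neg_mul_Ioi (a := n + 1) (by positivity) hb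
  rw [add_sub_cancel_right, Gamma_nat_eq_factorial] at h
  simp only [rpow_natCast, neg_mul] at h ⊢
  rw [h, ← Nat.cast_succ, rpow_natCast, one_div_pow, one_div_mul_eq_div]

lemma exp_neg_le_factorial_div_pow {x : ℝ} (hx : 0 < x) (n : ℕ) :
    exp (-x) ≤ n ! / x ^ n := by
  rw [exp_neg, inv_le_iff_one_le_mul₀ (exp_pos x), ← div_le_iff₀' (by positivity), one_div_div]
  exact pow_div_factorial_le_exp _ hx.le n

lemma rpow_le_factorial_div_mul_log_pow {α δ : ℝ} (hα0 : 0 < α) (hα1 : α < 1) (hδ : 0 < δ)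
    (n : ℕ) : α ^ δ ≤ n ! / (δ * log (1 / α)) ^ n := by
  have hL : 0 < log (1 / α) := log_pos ((one_lt_div hα0).2 hα1)
  rw [rpow_def_of_pos hα0, show log α * δ = -(δ * log (1 / α)) by rw [one_div, log_inv]; ring]
  exact exp_neg_le_factorial_div_pow (mul_pos hδ hL) n

lemma norm_integral_le_of_norm_le_pow_mul_exp {X : Type*} [NormedAddCommGroup X]
    [NormedSpace ℝ X] {F : ℝ → X} {n : ℕ} {a b c d : ℝ} (hb : 0 < b) (hd : 0 < d)
    (hF : ∀ q ∈ Ioi (0:ℝ), ‖F q‖ ≤ q ^ n * (a * exp (-b * q) + c * exp (-d * q))) :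
    ‖∫ q in Ioi 0, F q‖ ≤ n ! * (a / b ^ (n + 1) + c / d ^ (n + 1)) := by
  have hb' := integrableOn_pow_mul_exp_neg_mul_Ioi n hb
  have hd' := integrableOn_pow_mul_exp_neg_mul_Ioi n hd
  have hg : (fun q : ℝ => q ^ n * (a * exp (-b * q) + c * exp (-d * q)))
      = fun q => a * (q ^ n * exp (-b * q)) + c * (q ^ n * exp (-d * q)) := by
    ext q; ring
  calc ‖∫ q in Ioi 0, F q‖
      ≤ ∫ q in Ioi 0, q ^ n * (a * exp (-b * q) + c * exp (-d * q)) :=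
        norm_integral_le_of_norm_le (hg ▸ (hb'.const_mul a).add (hd'.const_mul c))
          ((ae_restrict_iff' measurableSet_Ioi).2 (ae_of_all _ hF))
    _ = n ! * (a / b ^ (n + 1) + c / d ^ (n + 1)) := by
        rw [hg, integral_add (hb'.const_mul a) (hd'.const_mul c), integral_const_mul,
          integral_const_mul, integral_pow_mul_exp_neg_mul_Ioi n hb,
          integral_pow_mul_exp_neg_mul_Ioi n hd]
        ring

section Semigroup

variable {X : Type*} [NormedAddCommGroup X] [NormedSpace ℝ X] {T S : ℝ → X →L[ℝ] X}
  {p p₁ lam ω C E : ℝ}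

lemma exp_mul_norm_comp_le_of_le_sub (hp : 0 ≤ p)
    (hS : ∀ α > (0:ℝ), ∀ q : ℝ, 0 ≤ q → q ≤ p₁ → ‖(S α).comp (T q)‖ ≤ E * α ^ q)
    {α q : ℝ} (hα : 0 < α) (hq0 : 0 ≤ q) (hq : q ≤ p₁ - p) :
    exp (-lam * q) * ‖(S α).comp (T (p + q))‖ ≤ E * exp (|lam| * (p₁ - p)) * α ^ (p + q) := by
  have hexp : exp (-lam * q) ≤ exp (|lam| * (p₁ - p)) :=
    exp_le_exp.2 (mul_le_mul (neg_le_abs lam) hq hq0 (abs_nonneg lam))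
  have hnorm := hS α hα (p + q) (by linarith) (by linarith)
  calc exp (-lam * q) * ‖(S α).comp (T (p + q))‖
      ≤ exp (|lam| * (p₁ - p)) * (E * α ^ (p + q)) :=
        mul_le_mul hexp hnorm (norm_nonneg _) (exp_pos _).le
    _ = E * exp (|lam| * (p₁ - p)) * α ^ (p + q) := by ring

lemma exp_mul_norm_comp_le_of_sub_le (hpp : p ≤ p₁) (hp₁ : 0 ≤ p₁) (hC : 0 ≤ C) (hE : 0 ≤ E)
    (hsemi : ∀ q ≥ (0:ℝ), ∀ q' ≥ (0:ℝ), T (q + q') = (T q).comp (T q'))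
    (hTnorm : ∀ q ≥ (0:ℝ), ‖T q‖ ≤ C * exp (ω * q))
    (hS : ∀ α > (0:ℝ), ∀ q : ℝ, 0 ≤ q → q ≤ p₁ → ‖(S α).comp (T q)‖ ≤ E * α ^ q)
    {α q : ℝ} (hα : 0 < α) (hq : p₁ - p ≤ q) :
    exp (-lam * q) * ‖(S α).comp (T (p + q))‖
      ≤ E * C * exp (|ω| * (p₁ - p)) * α ^ p₁ * exp (-(lam - ω) * q) := by
  have hsplit : T (p + q) = (T p₁).comp (T (q - (p₁ - p))) := by
    rw [← hsemi p₁ hp₁ _ (by linarith)]; ring_nf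
  have hnorm : ‖(S α).comp (T (p + q))‖ ≤ E * α ^ p₁ * (C * exp (ω * (q - (p₁ - p)))) := by
    rw [hsplit, ← ContinuousLinearMap.comp_assoc]
    exact (ContinuousLinearMap.opNorm_comp_le _ _).trans <|
      mul_le_mul (hS α hα p₁ hp₁ le_rfl) (hTnorm _ (by linarith)) (norm_nonneg _) (by positivity)
  have hexp : exp (-ω * (p₁ - p)) ≤ exp (|ω| * (p₁ - p)) :=
    exp_le_exp.2 (mul_le_mul_of_nonneg_right (neg_le_abs ω) (sub_nonneg.2 hpp))
  have hexp_add : exp (-lam * q) * exp (ω * (q - (p₁ - p)))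
      = exp (-ω * (p₁ - p)) * exp (-(lam - ω) * q) := by
    rw [← exp_add, ← exp_add]; ring_nf
  calc exp (-lam * q) * ‖(S α).comp (T (p + q))‖
      ≤ exp (-lam * q) * (E * α ^ p₁ * (C * exp (ω * (q - (p₁ - p))))) :=
        mul_le_mul_of_nonneg_left hnorm (exp_pos _).le
    _ = E * C * exp (-ω * (p₁ - p)) * α ^ p₁ * exp (-(lam - ω) * q) := by
        linear_combination (E * C * α ^ p₁) * hexp_add
    _ ≤ E * C * exp (|ω| * (p₁ - p)) * α ^ p₁ * exp (-(lam - ω) * q) := by gcongr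

lemma exp_mul_norm_comp_le (hp : 0 ≤ p) (hpp : p ≤ p₁) (hC : 0 ≤ C) (hE : 0 ≤ E)
    (hsemi : ∀ q ≥ (0:ℝ), ∀ q' ≥ (0:ℝ), T (q + q') = (T q).comp (T q'))
    (hTnorm : ∀ q ≥ (0:ℝ), ‖T q‖ ≤ C * exp (ω * q))
    (hS : ∀ α > (0:ℝ), ∀ q : ℝ, 0 ≤ q → q ≤ p₁ → ‖(S α).comp (T q)‖ ≤ E * α ^ q)
    {α q : ℝ} (hα : 0 < α) (hq : 0 ≤ q) :
    exp (-lam * q) * ‖(S α).comp (T (p + q))‖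
      ≤ E * exp (|lam| * (p₁ - p)) * α ^ (p + q)
        + E * C * exp (|ω| * (p₁ - p)) * α ^ p₁ * exp (-(lam - ω) * q) := by
  rcases le_total q (p₁ - p) with hqδ | hqδ
  · exact le_add_of_le_of_nonneg (exp_mul_norm_comp_le_of_le_sub hp hS hα hq hqδ)
      (by positivity)
  · exact le_add_of_nonneg_of_le (by positivity)
      (exp_mul_norm_comp_le_of_sub_le hpp (hp.trans hpp) hC hE hsemi hTnorm hS hα hqδ)

lemma integrableOn_pow_mul_exp_smul_apply (n : ℕ) (hlam : ω < lam) {w : X}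
    (hcont : ContinuousOn (fun q => T q w) (Ici 0))
    (hTnorm : ∀ q ≥ (0:ℝ), ‖T q‖ ≤ C * exp (ω * q)) :
    IntegrableOn (fun q : ℝ => (q ^ n * exp (-lam * q)) • T q w) (Ioi 0) := by
  have hmeas : AEStronglyMeasurable (fun q : ℝ => (q ^ n * exp (-lam * q)) • T q w)
      (volume.restrict (Ioi 0)) :=
    ((by fun_prop : Continuous fun q : ℝ => q ^ n * exp (-lam * q)).continuousOn.smul
      (hcont.mono Ioi_subset_Ici_self)).aestronglyMeasurable measurableSet_Ioi
  refine ((integrableOn_pow_mul_exp_neg_mul_Ioi n (sub_pos.2 hlam)).const_mul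
    (C * ‖w‖)).mono' hmeas ((ae_restrict_iff' measurableSet_Ioi).2 (ae_of_all _ fun q hq => ?_))
  have hq0 : (0:ℝ) ≤ q := le_of_lt hq
  calc ‖(q ^ n * exp (-lam * q)) • T q w‖
      = q ^ n * exp (-lam * q) * ‖T q w‖ := by
        rw [norm_smul, Real.norm_of_nonneg (by positivity)]
    _ ≤ q ^ n * exp (-lam * q) * (C * exp (ω * q) * ‖w‖) := by
        gcongr; exact (T q).le_of_opNorm_le (hTnorm q hq0) w
    _ = C * ‖w‖ * (q ^ n * exp (-(lam - ω) * q)) := by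
        rw [show -(lam - ω) * q = -lam * q + ω * q by ring, exp_add]; ring

lemma norm_apply_semigroup_integral_le [CompleteSpace X] (hp : 0 ≤ p) (hpp : p ≤ p₁)
    (hC : 0 ≤ C) (hE : 0 ≤ E) (hlam : ω < lam)
    (hsemi : ∀ q ≥ (0:ℝ), ∀ q' ≥ (0:ℝ), T (q + q') = (T q).comp (T q'))
    (hcont : ∀ w : X, ContinuousOn (fun q => T q w) (Ici 0))
    (hTnorm : ∀ q ≥ (0:ℝ), ‖T q‖ ≤ C * exp (ω * q))
    (hS : ∀ α > (0:ℝ), ∀ q : ℝ, 0 ≤ q → q ≤ p₁ → ‖(S α).comp (T q)‖ ≤ E * α ^ q)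
    (n : ℕ) (w : X) {α : ℝ} (hα0 : 0 < α) (hα1 : α < 1) :
    ‖S α (T p ((n ! : ℝ)⁻¹ • ∫ q in Ioi (0:ℝ), (q ^ n * exp (-lam * q)) • T q w))‖
      ≤ ‖w‖ * (E * exp (|lam| * (p₁ - p)) * α ^ p / log (1 / α) ^ (n + 1)
        + E * C * exp (|ω| * (p₁ - p)) * α ^ p₁ / (lam - ω) ^ (n + 1)) := by
  have hL : 0 < log (1 / α) := log_pos ((one_lt_div hα0).2 hα1)
  have hαq : ∀ q : ℝ, α ^ (p + q) = α ^ p * exp (-log (1 / α) * q) := fun q => by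
    rw [rpow_add hα0, rpow_def_of_pos hα0 q, one_div, log_inv, neg_neg]
  have hbound : ∀ q ∈ Ioi (0:ℝ), ‖(S α ∘L T p) ((q ^ n * exp (-lam * q)) • T q w)‖
      ≤ q ^ n * (‖w‖ * E * exp (|lam| * (p₁ - p)) * α ^ p * exp (-log (1 / α) * q)
        + ‖w‖ * E * C * exp (|ω| * (p₁ - p)) * α ^ p₁ * exp (-(lam - ω) * q)) := by
    intro q hq
    have hq0 : (0:ℝ) ≤ q := le_of_lt hq
    have hTpq : (S α ∘L T p) ((q ^ n * exp (-lam * q)) • T q w)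
        = (q ^ n * exp (-lam * q)) • ((S α).comp (T (p + q))) w := by
      rw [hsemi p hp q hq0, map_smul]; rfl
    rw [hTpq, norm_smul, Real.norm_of_nonneg (by positivity)]
    calc q ^ n * exp (-lam * q) * ‖((S α).comp (T (p + q))) w‖
        ≤ q ^ n * (exp (-lam * q) * ‖(S α).comp (T (p + q))‖) * ‖w‖ := by
          rw [mul_assoc (q ^ n), mul_assoc (q ^ n), mul_assoc]
          gcongr; exact ContinuousLinearMap.le_opNorm _ _
      _ ≤ q ^ n * (E * exp (|lam| * (p₁ - p)) * α ^ (p + q)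
          + E * C * exp (|ω| * (p₁ - p)) * α ^ p₁ * exp (-(lam - ω) * q)) * ‖w‖ := by
          gcongr; exact exp_mul_norm_comp_le hp hpp hC hE hsemi hTnorm hS hα0 hq0
      _ = _ := by rw [hαq]; ring
  have hint := integrableOn_pow_mul_exp_smul_apply n hlam (hcont w) hTnorm
  rw [← ContinuousLinearMap.comp_apply, ContinuousLinearMap.map_smul,
    ← (S α ∘L T p).integral_comp_comm hint, norm_smul, norm_inv, RCLike.norm_natCast,
    inv_mul_le_iff₀ (by positivity)]
  exact (norm_integral_le_of_norm_le_pow_mul_exp hL (sub_pos.2 hlam) hbound).trans_eq (by ring)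

end Semigroup

/-- Decay of the residual operator under a mixed logarithmic source condition
(Theorem 3.1, abstract semigroup form). -/
theorem stmt0 (p p₁ : ℝ) (ν : ℕ) (lam ω C E : ℝ)
    (hp : 0 ≤ p) (hpp : p < p₁) (hν : 1 ≤ ν) (hC : 0 < C) (hE : 0 < E)
    (hlam : ω < lam) :
    ∃ C' > (0:ℝ),
      ∀ (X : Type) [NormedAddCommGroup X] [NormedSpace ℝ X] [CompleteSpace X],
      ∀ (T : ℝ → X →L[ℝ] X) (S : ℝ → X →L[ℝ] X),
      T 0 = 1 →
      (∀ q ≥ (0:ℝ), ∀ q' ≥ (0:ℝ), T (q + q') = (T q).comp (T q')) →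
      (∀ w : X, ContinuousOn (fun q => T q w) (Set.Ici 0)) →
      (∀ q ≥ (0:ℝ), ‖T q‖ ≤ C * Real.exp (ω * q)) →
      (∀ α > (0:ℝ), ∀ q : ℝ, 0 ≤ q → q ≤ p₁ → ‖(S α).comp (T q)‖ ≤ E * α ^ q) →
      ∀ w : X,
        IntegrableOn (fun q : ℝ => (q ^ (ν - 1) * Real.exp (-lam * q)) • T q w)
          (Set.Ioi 0) ∧
        ∀ α ∈ Set.Ioo (0:ℝ) 1,
          ‖S α (T p (((Nat.factorial (ν - 1) : ℝ))⁻¹ •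
              ∫ q in Set.Ioi (0:ℝ), (q ^ (ν - 1) * Real.exp (-lam * q)) • T q w))‖
            ≤ C' * ‖w‖ * α ^ p / (Real.log (1 / α)) ^ ν := by
  have hδ := sub_pos.2 hpp
  have hlo := sub_pos.2 hlam
  obtain ⟨n, rfl⟩ : ∃ n, ν = n + 1 := ⟨ν - 1, by omega⟩
  refine ⟨E * exp (|lam| * (p₁ - p))
      + E * C * exp (|ω| * (p₁ - p)) * (n + 1)! / ((p₁ - p) * (lam - ω)) ^ (n + 1),
    by positivity, fun X _ _ _ T S _ hsemi hcont hTnorm hS w => ?_⟩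
  rw [Nat.add_sub_cancel]
  refine ⟨integrableOn_pow_mul_exp_smul_apply n hlam (hcont w) hTnorm, fun α ⟨hα0, hα1⟩ => ?_⟩
  have hαp₁ : α ^ p₁ ≤ α ^ p * ((n + 1)! / ((p₁ - p) * log (1 / α)) ^ (n + 1)) := by
    rw [show p₁ = p + (p₁ - p) by ring, rpow_add hα0, add_sub_cancel_left]
    gcongr
    exact rpow_le_factorial_div_mul_log_pow hα0 hα1 hδ (n + 1)
  calc _ ≤ ‖w‖ * (E * exp (|lam| * (p₁ - p)) * α ^ p / log (1 / α) ^ (n + 1)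
        + E * C * exp (|ω| * (p₁ - p)) * α ^ p₁ / (lam - ω) ^ (n + 1)) :=
        norm_apply_semigroup_integral_le hp hpp.le hC.le hE.le hlam hsemi hcont hTnorm hS n w
          hα0 hα1
    _ ≤ ‖w‖ * (E * exp (|lam| * (p₁ - p)) * α ^ p / log (1 / α) ^ (n + 1)
        + E * C * exp (|ω| * (p₁ - p))
          * (α ^ p * ((n + 1)! / ((p₁ - p) * log (1 / α)) ^ (n + 1))) / (lam - ω) ^ (n + 1)) := by
        gcongr
    _ = _ := by generalize p₁ - p = δ; generalize lam - ω = μ; rw [mul_pow, mul_pow]; ring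
end

section
/- A priori parameter choice rate (Theorem 4.1, abstract form): There exists a constant C > 0, depending only on p, ν, c₁, c₂, c*, e₀ and δ₀, such that for every δ ∈ (0, δ₀], every ρ ≥ 0, every u†, ū ∈ X with ‖ū − u†‖ ≤ ρ and ‖S_α(ū − u†)‖ ≤ c₁ ρ α^p (log(1/α))^{−ν} for all α ∈ (0,1), and every f^δ ∈ X with ‖A u† − f^δ‖ ≤ δ, the regularized element u^δ = ū − R_{α(δ)}(A ū − f^δ) with the a priori choice α(δ) = c₂ δ^{1/(p+1)} (log(1/δ))^{ν/(p+1)} satisfies ‖u^δ − u†‖ ≤ C max(ρ,1) δ^{p/(p+1)} (log(1/δ))^{−ν/(p+1)}. -/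
/-!
Write `L = log (1/δ)` and `α = α(δ)`. The error is `S_α (ū - u†) - R_α (A u† - f^δ)`. The data
part is at most `c* δ / α`, and the choice of `α` makes `δ / α` exactly `1 / c₂` times the rate.
For the approximation part, `(p + 1) log (1/α) = L - (p + 1) log c₂ - ν log L ≥ L / 2` once `L` is
large (as `log L = o(L)`), so the source condition bounds `S_α (ū - u†)` by a multiple of the rate.
For the remaining `δ`, bounded away from `0`, the rate is bounded below and `‖S_α‖ ≤ e₀` suffices.
-/

open Real Filter

section Regularization

variable {𝕜 X Y : Type*} [NontriviallyNormedField 𝕜]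
  [SeminormedAddCommGroup X] [NormedSpace 𝕜 X] [SeminormedAddCommGroup Y] [NormedSpace 𝕜 Y]

theorem norm_regularized_sub_le (A : X →L[𝕜] Y) (R : Y →L[𝕜] X) (ubar ust : X) (fd : Y) :
    ‖ubar - R (A ubar - fd) - ust‖ ≤ ‖(1 - R.comp A) (ubar - ust)‖ + ‖R‖ * ‖A ust - fd‖ := by
  have hsplit : ubar - R (A ubar - fd) - ust = (1 - R.comp A) (ubar - ust) - R (A ust - fd) := by
    simp only [sub_apply, ContinuousLinearMap.comp_apply, one_apply_eq_self, map_sub]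
    abel
  rw [hsplit]
  exact (norm_sub_le _ _).trans (by gcongr; exact R.le_opNorm _)

end Regularization

theorem eventually_add_mul_log_le (a b : ℝ) : ∀ᶠ x in atTop, a + b * log x ≤ x := by
  filter_upwards [(isLittleO_log_id_atTop.const_mul_left b).bound one_half_pos,
    eventually_ge_atTop (2 * a), eventually_ge_atTop 0] with x hlog ha hx
  rw [norm_eq_abs, norm_eq_abs, id, abs_of_nonneg hx] at hlog
  linarith [le_abs_self (b * log x)]

theorem exists_forall_ge_add_mul_log_le (a b : ℝ) :
    ∃ x₀ > 0, ∀ x ≥ x₀, a + b * log x ≤ x := by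
  obtain ⟨x₀, h⟩ := eventually_atTop.1 (eventually_add_mul_log_le a b)
  exact ⟨max x₀ 1, by positivity, fun x hx => h x (le_of_max_le_left hx)⟩

noncomputable def aprioriParam (c₂ p : ℝ) (ν : ℕ) (δ : ℝ) : ℝ :=
  c₂ * δ ^ (1 / (p + 1)) * log (1 / δ) ^ ((ν : ℝ) / (p + 1))

noncomputable def aprioriRate (p : ℝ) (ν : ℕ) (δ : ℝ) : ℝ :=
  δ ^ (p / (p + 1)) / log (1 / δ) ^ ((ν : ℝ) / (p + 1))

section APriori

variable {c₂ p δ : ℝ} {ν : ℕ}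

theorem log_one_div_pos_of_lt_one (hδ : 0 < δ) (hδ1 : δ < 1) : 0 < log (1 / δ) :=
  log_pos (one_lt_one_div hδ hδ1)

theorem aprioriParam_pos (hc₂ : 0 < c₂) (hδ : 0 < δ) (hδ1 : δ < 1) :
    0 < aprioriParam c₂ p ν δ := by
  have := log_one_div_pos_of_lt_one hδ hδ1
  unfold aprioriParam; positivity

theorem aprioriRate_pos (hδ : 0 < δ) (hδ1 : δ < 1) : 0 < aprioriRate p ν δ := by
  have := log_one_div_pos_of_lt_one hδ hδ1
  unfold aprioriRate; positivity

theorem div_aprioriParam (hc₂ : 0 < c₂) (hp : 0 ≤ p) (hδ : 0 < δ) (hδ1 : δ < 1) :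
    δ / aprioriParam c₂ p ν δ = aprioriRate p ν δ / c₂ := by
  have hL := log_one_div_pos_of_lt_one hδ hδ1
  have hδsplit : δ ^ (p / (p + 1)) * δ ^ (1 / (p + 1)) = δ := by
    rw [← rpow_add hδ, ← add_div, div_self (by linarith), rpow_one]
  unfold aprioriParam aprioriRate
  nth_rewrite 1 [← hδsplit]
  field_simp

theorem mul_log_one_div_aprioriParam (hc₂ : 0 < c₂) (hp : 0 ≤ p) (hδ : 0 < δ) (hδ1 : δ < 1) :
    (p + 1) * log (1 / aprioriParam c₂ p ν δ)
      = log (1 / δ) - ((p + 1) * log c₂ + ν * log (log (1 / δ))) := by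
  have hL := log_one_div_pos_of_lt_one hδ hδ1
  unfold aprioriParam
  rw [one_div (c₂ * _ * _), log_inv, log_mul (by positivity) (by positivity),
    log_mul hc₂.ne' (by positivity), log_rpow hδ, log_rpow hL, one_div δ, log_inv]
  field_simp
  ring

theorem aprioriParam_rpow (hc₂ : 0 < c₂) (hδ : 0 < δ) (hδ1 : δ < 1) :
    aprioriParam c₂ p ν δ ^ p
      = c₂ ^ p * δ ^ (p / (p + 1)) * log (1 / δ) ^ (ν * p / (p + 1)) := by
  have hL := log_one_div_pos_of_lt_one hδ hδ1
  unfold aprioriParam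
  rw [mul_rpow (by positivity) (by positivity), mul_rpow hc₂.le (by positivity),
    ← rpow_mul hδ.le, ← rpow_mul hL.le]
  ring_nf

theorem aprioriParam_lt_one (hc₂ : 0 < c₂) (hp : 0 ≤ p) (hδ : 0 < δ) (hδ1 : δ < 1)
    (hsmall : 2 * ((p + 1) * log c₂ + ν * log (log (1 / δ))) ≤ log (1 / δ)) :
    aprioriParam c₂ p ν δ < 1 := by
  have hL := log_one_div_pos_of_lt_one hδ hδ1
  have hid := mul_log_one_div_aprioriParam (ν := ν) hc₂ hp hδ hδ1
  rw [one_div, log_inv] at hid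
  rw [← log_neg_iff (aprioriParam_pos hc₂ hδ hδ1)]
  nlinarith

theorem aprioriParam_rpow_div_le (hc₂ : 0 < c₂) (hp : 0 ≤ p) (hδ : 0 < δ) (hδ1 : δ < 1)
    (hsmall : 2 * ((p + 1) * log c₂ + ν * log (log (1 / δ))) ≤ log (1 / δ)) :
    aprioriParam c₂ p ν δ ^ p / log (1 / aprioriParam c₂ p ν δ) ^ ν
      ≤ c₂ ^ p * (2 * (p + 1)) ^ ν * aprioriRate p ν δ := by
  have hL := log_one_div_pos_of_lt_one hδ hδ1
  have hid := mul_log_one_div_aprioriParam (ν := ν) hc₂ hp hδ hδ1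
  have hα := aprioriParam_pos (p := p) (ν := ν) hc₂ hδ hδ1
  set L := log (1 / δ)
  set α := aprioriParam c₂ p ν δ
  have hℓ : L / (2 * (p + 1)) ≤ log (1 / α) := by
    rw [div_le_iff₀ (by positivity)]
    linarith
  have hLν : L ^ (ν * p / (p + 1)) * L ^ ((ν : ℝ) / (p + 1)) = L ^ ν := by
    rw [← rpow_add hL, ← rpow_natCast]
    congr 1
    field_simp
  calc α ^ p / log (1 / α) ^ ν ≤ α ^ p / (L / (2 * (p + 1))) ^ ν := by gcongr
    _ = c₂ ^ p * δ ^ (p / (p + 1)) * L ^ (ν * p / (p + 1)) / (L / (2 * (p + 1))) ^ ν := by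
      rw [aprioriParam_rpow hc₂ hδ hδ1]
    _ = c₂ ^ p * (2 * (p + 1)) ^ ν * (δ ^ (p / (p + 1)) / L ^ ((ν : ℝ) / (p + 1))) := by
      rw [div_pow, ← hLν]
      field_simp

theorem exp_neg_div_rpow_le_aprioriRate {L₁ : ℝ} (hp : 0 ≤ p) (hδ : 0 < δ) (hδ1 : δ < 1)
    (hL₁ : log (1 / δ) ≤ L₁) :
    exp (-L₁) / L₁ ^ ((ν : ℝ) / (p + 1)) ≤ aprioriRate p ν δ := by
  have hL := log_one_div_pos_of_lt_one hδ hδ1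
  have hδexp : exp (-log (1 / δ)) = δ := by rw [one_div, log_inv, neg_neg, exp_log hδ]
  have hexp : exp (-L₁) ≤ δ ^ (p / (p + 1)) :=
    calc exp (-L₁) ≤ exp (-log (1 / δ)) := exp_le_exp.2 (neg_le_neg hL₁)
      _ = δ ^ (1 : ℝ) := by rw [hδexp, rpow_one]
      _ ≤ δ ^ (p / (p + 1)) :=
        rpow_le_rpow_of_exponent_ge hδ hδ1.le ((div_le_one (by linarith)).2 (by linarith))
  unfold aprioriRate
  exact div_le_div₀ (by positivity) hexp (by positivity)
    (rpow_le_rpow hL.le hL₁ (by positivity))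

end APriori

theorem norm_apply_aprioriParam_le {𝕜 E F : Type*} [NontriviallyNormedField 𝕜]
    [SeminormedAddCommGroup E] [NormedSpace 𝕜 E] [SeminormedAddCommGroup F] [NormedSpace 𝕜 F]
    {c₂ p δ c₁ e₀ ρ L₁ : ℝ} {ν : ℕ} (S : ℝ → E →L[𝕜] F) (v : E)
    (hc₂ : 0 < c₂) (hp : 0 ≤ p) (hc₁ : 0 ≤ c₁) (he₀ : 0 ≤ e₀) (hδ : 0 < δ) (hδ1 : δ < 1)
    (hL₁ : 0 ≤ L₁) (hsmall : ∀ L ≥ L₁, 2 * ((p + 1) * log c₂ + ν * log L) ≤ L)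
    (hv : ‖v‖ ≤ ρ) (hS : ∀ α > 0, ‖S α‖ ≤ e₀)
    (hsrc : ∀ α ∈ Set.Ioo (0 : ℝ) 1, ‖S α v‖ ≤ c₁ * ρ * α ^ p / log (1 / α) ^ ν) :
    ‖S (aprioriParam c₂ p ν δ) v‖
      ≤ (c₁ * c₂ ^ p * (2 * (p + 1)) ^ ν + e₀ * (exp L₁ * L₁ ^ ((ν : ℝ) / (p + 1))))
        * max ρ 1 * aprioriRate p ν δ := by
  have hα := aprioriParam_pos (p := p) (ν := ν) hc₂ hδ hδ1
  have hrate := aprioriRate_pos (p := p) (ν := ν) hδ hδ1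
  have hρ : 0 ≤ ρ := (norm_nonneg v).trans hv
  have hρmax : ρ ≤ max ρ 1 := le_max_left ρ 1
  rcases le_or_gt L₁ (log (1 / δ)) with hδsmall | hδlarge
  · have hlt := aprioriParam_lt_one hc₂ hp hδ hδ1 (hsmall _ hδsmall)
    calc ‖S (aprioriParam c₂ p ν δ) v‖
        ≤ c₁ * ρ * (aprioriParam c₂ p ν δ ^ p / log (1 / aprioriParam c₂ p ν δ) ^ ν) := by
          rw [← mul_div_assoc]; exact hsrc _ ⟨hα, hlt⟩
      _ ≤ c₁ * ρ * (c₂ ^ p * (2 * (p + 1)) ^ ν * aprioriRate p ν δ) := by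
          gcongr; exact aprioriParam_rpow_div_le hc₂ hp hδ hδ1 (hsmall _ hδsmall)
      _ = c₁ * c₂ ^ p * (2 * (p + 1)) ^ ν * ρ * aprioriRate p ν δ := by ring
      _ ≤ _ := by gcongr; exact le_add_of_nonneg_right (by positivity)
  · have hbelow := exp_neg_div_rpow_le_aprioriRate (ν := ν) hp hδ hδ1 hδlarge.le
    have hL₁pos : 0 < L₁ := (log_one_div_pos_of_lt_one hδ hδ1).trans hδlarge
    rw [exp_neg, div_le_iff₀ (by positivity), inv_le_iff_one_le_mul₀' (exp_pos _)] at hbelow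
    calc ‖S (aprioriParam c₂ p ν δ) v‖ ≤ e₀ * ρ :=
          ((S _).le_opNorm v).trans (mul_le_mul (hS _ hα) hv (norm_nonneg v) he₀)
      _ ≤ e₀ * (exp L₁ * (aprioriRate p ν δ * L₁ ^ ((ν : ℝ) / (p + 1)))) * max ρ 1 := by
          rw [mul_assoc]
          exact mul_le_mul_of_nonneg_left
            (hρmax.trans (le_mul_of_one_le_left (by positivity) hbelow)) he₀
      _ = e₀ * (exp L₁ * L₁ ^ ((ν : ℝ) / (p + 1))) * max ρ 1 * aprioriRate p ν δ := by ring
      _ ≤ _ := by gcongr; exact le_add_of_nonneg_left (by positivity)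

theorem stmt1_general (p : ℝ) (ν : ℕ) (c₁ c₂ cst e₀ δ₀ : ℝ)
    (hp : 0 ≤ p) (hc₁ : 0 < c₁) (hc₂ : 0 < c₂) (hcst : 0 < cst)
    (he₀ : 0 < e₀) (hδ₀ : δ₀ ∈ Set.Ioo (0:ℝ) 1) :
    ∃ C > (0:ℝ),
      ∀ (X : Type) [NormedAddCommGroup X] [NormedSpace ℝ X] [CompleteSpace X],
      ∀ (A : X →L[ℝ] X) (R : ℝ → X →L[ℝ] X),
      (∀ α > (0:ℝ), ‖R α‖ ≤ cst / α) →
      (∀ α > (0:ℝ), ‖(1 : X →L[ℝ] X) - (R α).comp A‖ ≤ e₀) →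
      ∀ δ ∈ Set.Ioc (0:ℝ) δ₀, ∀ ρ ≥ (0:ℝ), ∀ ust ubar fd : X,
        ‖ubar - ust‖ ≤ ρ →
        (∀ α ∈ Set.Ioo (0:ℝ) 1,
          ‖((1 : X →L[ℝ] X) - (R α).comp A) (ubar - ust)‖
            ≤ c₁ * ρ * α ^ p / (Real.log (1 / α)) ^ ν) →
        ‖A ust - fd‖ ≤ δ →
        ‖(ubar - R (c₂ * δ ^ (1 / (p + 1)) * (Real.log (1 / δ)) ^ ((ν : ℝ) / (p + 1)))
            (A ubar - fd)) - ust‖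
          ≤ C * max ρ 1 * δ ^ (p / (p + 1)) / (Real.log (1 / δ)) ^ ((ν : ℝ) / (p + 1)) := by
  obtain ⟨L₁, hL₁, hsmall⟩ := exists_forall_ge_add_mul_log_le (2 * ((p + 1) * log c₂)) (2 * ν)
  set Capprox := c₁ * c₂ ^ p * (2 * (p + 1)) ^ ν + e₀ * (exp L₁ * L₁ ^ ((ν : ℝ) / (p + 1)))
  refine ⟨cst / c₂ + Capprox, by positivity, ?_⟩
  intro X _ _ _ A R hR hS δ hδ ρ _ ust ubar fd hv hsrc hdata
  have hδ1 : δ < 1 := hδ.2.trans_lt hδ₀.2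
  have hα := aprioriParam_pos (p := p) (ν := ν) hc₂ hδ.1 hδ1
  have hrate := aprioriRate_pos (p := p) (ν := ν) hδ.1 hδ1
  have hdataErr : ‖R (aprioriParam c₂ p ν δ)‖ * ‖A ust - fd‖
      ≤ cst / c₂ * max ρ 1 * aprioriRate p ν δ :=
    calc ‖R (aprioriParam c₂ p ν δ)‖ * ‖A ust - fd‖ ≤ cst / aprioriParam c₂ p ν δ * δ :=
          mul_le_mul (hR _ hα) hdata (norm_nonneg _) (by positivity)
      _ = cst / c₂ * aprioriRate p ν δ := by
          rw [div_mul_eq_mul_div, mul_div_assoc, div_aprioriParam hc₂ hp hδ.1 hδ1]; ring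
      _ ≤ cst / c₂ * max ρ 1 * aprioriRate p ν δ := by
          gcongr; exact le_mul_of_one_le_right (by positivity) (le_max_right ρ 1)
  have happroxErr := norm_apply_aprioriParam_le (fun α ↦ 1 - (R α).comp A) (ubar - ust) hc₂ hp
    hc₁.le he₀.le hδ.1 hδ1 hL₁.le (fun L hL ↦ by linarith [hsmall L hL]) hv hS hsrc
  rw [mul_div_assoc]
  calc _ ≤ _ := norm_regularized_sub_le A (R (aprioriParam c₂ p ν δ)) ubar ust fd
    _ ≤ Capprox * max ρ 1 * aprioriRate p ν δ + cst / c₂ * max ρ 1 * aprioriRate p ν δ :=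
        add_le_add happroxErr hdataErr
    _ = (cst / c₂ + Capprox) * max ρ 1 * aprioriRate p ν δ := by ring

/-- A priori parameter choice rate (Theorem 4.1, abstract form). -/
theorem stmt1 (p : ℝ) (ν : ℕ) (c₁ c₂ cst e₀ δ₀ : ℝ)
    (hp : 0 ≤ p) (hν : 1 ≤ ν) (hc₁ : 0 < c₁) (hc₂ : 0 < c₂) (hcst : 0 < cst)
    (he₀ : 0 < e₀) (hδ₀ : δ₀ ∈ Set.Ioo (0:ℝ) 1) :
    ∃ C > (0:ℝ),
      ∀ (X : Type) [NormedAddCommGroup X] [NormedSpace ℝ X] [CompleteSpace X],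
      ∀ (A : X →L[ℝ] X) (R : ℝ → X →L[ℝ] X),
      (∀ α > (0:ℝ), ‖R α‖ ≤ cst / α) →
      (∀ α > (0:ℝ), ‖(1 : X →L[ℝ] X) - (R α).comp A‖ ≤ e₀) →
      ∀ δ ∈ Set.Ioc (0:ℝ) δ₀, ∀ ρ ≥ (0:ℝ), ∀ ust ubar fd : X,
        ‖ubar - ust‖ ≤ ρ →
        (∀ α ∈ Set.Ioo (0:ℝ) 1,
          ‖((1 : X →L[ℝ] X) - (R α).comp A) (ubar - ust)‖
            ≤ c₁ * ρ * α ^ p / (Real.log (1 / α)) ^ ν) →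
        ‖A ust - fd‖ ≤ δ →
        ‖(ubar - R (c₂ * δ ^ (1 / (p + 1)) * (Real.log (1 / δ)) ^ ((ν : ℝ) / (p + 1)))
            (A ubar - fd)) - ust‖
          ≤ C * max ρ 1 * δ ^ (p / (p + 1)) / (Real.log (1 / δ)) ^ ((ν : ℝ) / (p + 1)) :=
  stmt1_general p ν c₁ c₂ cst e₀ δ₀ hp hc₁ hc₂ hcst he₀ hδ₀
end

section
/- Interpolation inequality for mixed smoothness (Theorem 4.2, abstract form): There exists a constant C > 0, depending only on p, ν, c₁, c* and δ₀, such that for every u ∈ X and ρ ≥ 0 satisfying ‖S_α u‖ ≤ c₁ ρ α^p (log(1/α))^{−ν} for all α ∈ (0,1), if 0 < ‖Au‖ ≤ δ₀ then ‖u‖ ≤ C max(ρ,1) ‖Au‖^{p/(p+1)} (log(1/‖Au‖))^{−ν/(p+1)}. -/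
/-!
Split `u = S_α u + R_α (A u)`: with `δ = ‖A u‖` this gives
`‖u‖ ≤ c₁ ρ α ^ p / log (1 / α) ^ ν + c* δ / α` for every `α ∈ (0, 1)`.
Choose `α ^ (p + 1) = δ log (1 / δ) ^ ν / (2 ^ ν ν!)`. The exponential series gives
`x ^ ν ≤ 2 ^ ν ν! e ^ (x / 2)`, hence `α ^ (p + 1) ≤ δ ^ (1 / 2)` and
`log (1 / α) ≥ log (1 / δ) / (2 (p + 1))`. With this, the first term is at most
`c₁ ρ (2 (p + 1)) ^ ν / (2 ^ ν ν!) · δ / α`, so both terms are multiples of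
`δ / α = (2 ^ ν ν!) ^ (1 / (p + 1)) δ ^ (p / (p + 1)) / log (1 / δ) ^ (ν / (p + 1))`.
-/

open Real Nat

theorem pow_div_le_exp_half {x : ℝ} (hx : 0 ≤ x) (n : ℕ) :
    x ^ n / (2 ^ n * n !) ≤ exp (x / 2) := by
  have := Real.pow_div_factorial_le_exp (x := x / 2) (by positivity) n
  rwa [div_pow, div_div] at this

theorem norm_le_norm_one_sub_comp_apply_add {𝕜 X Y : Type*} [NontriviallyNormedField 𝕜]
    [SeminormedAddCommGroup X] [NormedSpace 𝕜 X] [SeminormedAddCommGroup Y] [NormedSpace 𝕜 Y]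
    (A : X →L[𝕜] Y) (R : Y →L[𝕜] X) (u : X) :
    ‖u‖ ≤ ‖((1 : X →L[𝕜] X) - R.comp A) u‖ + ‖R‖ * ‖A u‖ :=
  calc ‖u‖ = ‖((1 : X →L[𝕜] X) - R.comp A) u + R (A u)‖ := by simp
    _ ≤ _ := (norm_add_le _ _).trans (by gcongr; exact R.le_opNorm _)

theorem log_one_div_pos_of_mem_Ioo {δ : ℝ} (hδ : δ ∈ Set.Ioo 0 1) : 0 < log (1 / δ) :=
  log_pos (one_lt_one_div hδ.1 hδ.2)

noncomputable def balancedParam (p : ℝ) (n : ℕ) (δ : ℝ) : ℝ :=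
  (δ * log (1 / δ) ^ n / (2 ^ n * n !)) ^ (p + 1)⁻¹

section balancedParam

variable {p δ : ℝ} (n : ℕ)

theorem balancedParam_pos (hδ : δ ∈ Set.Ioo 0 1) : 0 < balancedParam p n δ := by
  have := log_one_div_pos_of_mem_Ioo hδ
  have := hδ.1
  unfold balancedParam
  positivity

theorem balancedParam_rpow_add_one (hp : -1 < p) (hδ : δ ∈ Set.Ioo 0 1) :
    balancedParam p n δ ^ (p + 1) = δ * log (1 / δ) ^ n / (2 ^ n * n !) := by
  have := log_one_div_pos_of_mem_Ioo hδ
  have := hδ.1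
  exact rpow_inv_rpow (by positivity) (by linarith)

theorem log_one_div_div_le_log_one_div_balancedParam (hp : -1 < p) (hδ : δ ∈ Set.Ioo 0 1) :
    log (1 / δ) / (2 * (p + 1)) ≤ log (1 / balancedParam p n δ) := by
  have hL := log_one_div_pos_of_mem_Ioo hδ
  have hlog_scaled : log (log (1 / δ) ^ n / (2 ^ n * n !)) ≤ log (1 / δ) / 2 := by
    rw [← exp_le_exp, exp_log (by positivity)]
    exact pow_div_le_exp_half hL.le n
  have hlog : (p + 1) * log (balancedParam p n δ)
      = -log (1 / δ) + log (log (1 / δ) ^ n / (2 ^ n * n !)) := by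
    rw [← log_rpow (balancedParam_pos n hδ), balancedParam_rpow_add_one n hp hδ, mul_div_assoc,
      log_mul hδ.1.ne' (by positivity), one_div, log_inv, neg_neg]
  rw [one_div (balancedParam p n δ), log_inv, div_le_iff₀ (by linarith)]
  linarith

theorem balancedParam_lt_one (hp : -1 < p) (hδ : δ ∈ Set.Ioo 0 1) :
    balancedParam p n δ < 1 := by
  have := (div_pos (log_one_div_pos_of_mem_Ioo hδ) (by linarith : (0 : ℝ) < 2 * (p + 1))).trans_le
    (log_one_div_div_le_log_one_div_balancedParam n hp hδ)
  rw [one_div, log_inv, neg_pos] at this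
  exact (log_neg_iff (balancedParam_pos n hδ)).mp this

theorem rpow_div_log_pow_le (hp : -1 < p) (hδ : δ ∈ Set.Ioo 0 1) :
    balancedParam p n δ ^ p / log (1 / balancedParam p n δ) ^ n
      ≤ (2 * (p + 1)) ^ n / (2 ^ n * n !) * (δ / balancedParam p n δ) := by
  set α := balancedParam p n δ
  have hα : 0 < α := balancedParam_pos n hδ
  have hL := log_one_div_pos_of_mem_Ioo hδ
  have hp1 : 0 < p + 1 := by linarith
  have hαp : α ^ p = δ * log (1 / δ) ^ n / (2 ^ n * n !) / α := by
    rw [← balancedParam_rpow_add_one n hp hδ, rpow_add_one hα.ne', mul_div_cancel_right₀ _ hα.ne']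
  calc α ^ p / log (1 / α) ^ n ≤ α ^ p / (log (1 / δ) / (2 * (p + 1))) ^ n := by
        gcongr
        exact log_one_div_div_le_log_one_div_balancedParam n hp hδ
    _ = _ := by
        rw [hαp, div_pow]
        field_simp

theorem div_balancedParam_eq (hp : -1 < p) (hδ : δ ∈ Set.Ioo 0 1) :
    δ / balancedParam p n δ
      = (2 ^ n * n ! : ℝ) ^ (p + 1)⁻¹ * δ ^ (p / (p + 1))
          / log (1 / δ) ^ ((n : ℝ) / (p + 1)) := by
  have hL := log_one_div_pos_of_mem_Ioo hδ
  have hp1 : 0 < p + 1 := by linarith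
  have hδ0 := hδ.1
  have hδ_split : δ ^ (p / (p + 1)) * δ ^ (p + 1)⁻¹ = δ := by
    rw [← rpow_add hδ0, show p / (p + 1) + (p + 1)⁻¹ = 1 by field_simp, rpow_one]
  have hL_pow : (log (1 / δ) ^ n) ^ (p + 1)⁻¹ = log (1 / δ) ^ ((n : ℝ) / (p + 1)) := by
    rw [← rpow_natCast, ← rpow_mul hL.le, ← div_eq_mul_inv]
  rw [balancedParam, div_rpow (by positivity) (by positivity), mul_rpow hδ0.le (by positivity),
    hL_pow]
  nth_rewrite 1 [← hδ_split]
  field_simp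

end balancedParam

theorem stmt2_general (p : ℝ) (ν : ℕ) (c₁ cst δ₀ : ℝ)
    (hp : 0 ≤ p) (hc₁ : 0 < c₁) (hcst : 0 < cst)
    (hδ₀ : δ₀ ∈ Set.Ioo (0:ℝ) 1) :
    ∃ C > (0:ℝ),
      ∀ (X : Type) [NormedAddCommGroup X] [NormedSpace ℝ X] [CompleteSpace X],
      ∀ (A : X →L[ℝ] X) (R : ℝ → X →L[ℝ] X),
      (∀ α > (0:ℝ), ‖R α‖ ≤ cst / α) →
      ∀ (u : X) (ρ : ℝ), 0 ≤ ρ →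
        (∀ α ∈ Set.Ioo (0:ℝ) 1,
          ‖((1 : X →L[ℝ] X) - (R α).comp A) u‖
            ≤ c₁ * ρ * α ^ p / (Real.log (1 / α)) ^ ν) →
        0 < ‖A u‖ → ‖A u‖ ≤ δ₀ →
        ‖u‖ ≤ C * max ρ 1 * ‖A u‖ ^ (p / (p + 1))
              / (Real.log (1 / ‖A u‖)) ^ ((ν : ℝ) / (p + 1)) := by
  set k := (2 * (p + 1)) ^ ν / (2 ^ ν * ν ! : ℝ)
  refine ⟨(c₁ * k + cst) * (2 ^ ν * ν ! : ℝ) ^ (p + 1)⁻¹, by positivity, ?_⟩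
  intro X _ _ _ A R hR u ρ hρ hS hδpos hδle
  have hp' : -1 < p := by linarith
  have hδ : ‖A u‖ ∈ Set.Ioo 0 1 := ⟨hδpos, hδle.trans_lt hδ₀.2⟩
  set α := balancedParam p ν ‖A u‖
  have hα : α ∈ Set.Ioo 0 1 := ⟨balancedParam_pos ν hδ, balancedParam_lt_one ν hp' hδ⟩
  have hδα : 0 ≤ ‖A u‖ / α := div_nonneg hδ.1.le hα.1.le
  calc ‖u‖ ≤ ‖((1 : X →L[ℝ] X) - (R α).comp A) u‖ + ‖R α‖ * ‖A u‖ :=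
        norm_le_norm_one_sub_comp_apply_add A (R α) u
    _ ≤ c₁ * ρ * α ^ p / log (1 / α) ^ ν + cst / α * ‖A u‖ := by
        gcongr
        exacts [hS α hα, hR α hα.1]
    _ = c₁ * ρ * (α ^ p / log (1 / α) ^ ν) + cst * (‖A u‖ / α) := by ring
    _ ≤ c₁ * ρ * (k * (‖A u‖ / α)) + cst * (‖A u‖ / α) := by
        gcongr
        exact rpow_div_log_pow_le ν hp' hδ
    _ = (c₁ * k * ρ + cst) * (‖A u‖ / α) := by ring
    _ ≤ (c₁ * k + cst) * max ρ 1 * (‖A u‖ / α) := by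
        gcongr
        nlinarith [le_max_left ρ 1, le_max_right ρ 1, (by positivity : 0 ≤ c₁ * k)]
    _ = _ := by
        rw [div_balancedParam_eq ν hp' hδ]
        ring

/-- Interpolation inequality for mixed smoothness (Theorem 4.2, abstract form). -/
theorem stmt2 (p : ℝ) (ν : ℕ) (c₁ cst δ₀ : ℝ)
    (hp : 0 ≤ p) (hν : 1 ≤ ν) (hc₁ : 0 < c₁) (hcst : 0 < cst)
    (hδ₀ : δ₀ ∈ Set.Ioo (0:ℝ) 1) :
    ∃ C > (0:ℝ),
      ∀ (X : Type) [NormedAddCommGroup X] [NormedSpace ℝ X] [CompleteSpace X],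
      ∀ (A : X →L[ℝ] X) (R : ℝ → X →L[ℝ] X),
      (∀ α > (0:ℝ), ‖R α‖ ≤ cst / α) →
      ∀ (u : X) (ρ : ℝ), 0 ≤ ρ →
        (∀ α ∈ Set.Ioo (0:ℝ) 1,
          ‖((1 : X →L[ℝ] X) - (R α).comp A) u‖
            ≤ c₁ * ρ * α ^ p / (Real.log (1 / α)) ^ ν) →
        0 < ‖A u‖ → ‖A u‖ ≤ δ₀ →
        ‖u‖ ≤ C * max ρ 1 * ‖A u‖ ^ (p / (p + 1))
              / (Real.log (1 / ‖A u‖)) ^ ((ν : ℝ) / (p + 1)) :=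
  stmt2_general p ν c₁ cst δ₀ hp hc₁ hcst hδ₀
end

section
/- Membership criterion for the generator of a C₀-semigroup (Proposition 5.1): Let u ∈ X be such that the map t ↦ T(t)u is differentiable at t = 1, with derivative y ∈ X, and suppose that the operator T(1) is injective. Then the limit lim_{h→0⁺} (T(h)u − u)/h exists in X (i.e., u belongs to the domain of the infinitesimal generator) if and only if y belongs to the range of T(1). -/
/-!
Everything rests on `T(a + h) u - T(a) u = T(a) (T(h) u - u)`. If the difference quotients of
`T(·) u` at `0` converge to `L`, this identity makes the right derivative of the orbit at `1`
equal to `T(1) L`, so `y = T(1) L`. Conversely, if `y = T(1) w`, the semigroup law moves the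
derivative at `1` to every `1 + r` with `r ≥ 0`, where it is `T(r) y = T(1) (T(r) w)`. Integrating
over `r ∈ [0, h]` gives `T(1) (T(h) u - u) = T(1) ∫₀ʰ T(r) w dr`, and since `T(1)` is injective
the difference quotients of `T(·) u` at `0` are averages of the continuous `r ↦ T(r) w`, which
converge to `T(0) w = w`.
-/

open Filter Set Topology

section Semigroup

variable {X : Type*} [NormedAddCommGroup X] [NormedSpace ℝ X] {T : ℝ → X →L[ℝ] X}

lemma semigroup_apply_add (hT : ∀ s ≥ (0 : ℝ), ∀ t ≥ (0 : ℝ), T (s + t) = (T s).comp (T t))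
    {s t : ℝ} (hs : 0 ≤ s) (ht : 0 ≤ t) (x : X) : T (s + t) x = T s (T t x) := by
  rw [hT s hs t ht, ContinuousLinearMap.comp_apply]

lemma semigroup_apply_comm (hT : ∀ s ≥ (0 : ℝ), ∀ t ≥ (0 : ℝ), T (s + t) = (T s).comp (T t))
    {s t : ℝ} (hs : 0 ≤ s) (ht : 0 ≤ t) (x : X) : T s (T t x) = T t (T s x) := by
  rw [← semigroup_apply_add hT hs ht, add_comm, semigroup_apply_add hT ht hs]

lemma semigroup_orbit_add_sub (hT : ∀ s ≥ (0 : ℝ), ∀ t ≥ (0 : ℝ), T (s + t) = (T s).comp (T t))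
    {a h : ℝ} (ha : 0 ≤ a) (hh : 0 ≤ h) (u : X) :
    T (a + h) u - T a u = T a (T h u - u) := by
  rw [map_sub, semigroup_apply_add hT ha hh]

lemma tendsto_semigroup_slope_of_tendsto_slope_zero
    (hT : ∀ s ≥ (0 : ℝ), ∀ t ≥ (0 : ℝ), T (s + t) = (T s).comp (T t)) {a : ℝ} (ha : 0 ≤ a)
    {u L : X} (hL : Tendsto (fun h : ℝ => h⁻¹ • (T h u - u)) (𝓝[>] 0) (𝓝 L)) :
    Tendsto (fun h : ℝ => h⁻¹ • (T (a + h) u - T a u)) (𝓝[>] 0) (𝓝 (T a L)) := by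
  refine ((T a).continuous.tendsto L |>.comp hL).congr' ?_
  filter_upwards [self_mem_nhdsWithin] with h (hh : 0 < h)
  rw [Function.comp_apply, map_smul, semigroup_orbit_add_sub hT ha hh.le]

lemma HasDerivAt.semigroup_orbit_add
    (hT : ∀ s ≥ (0 : ℝ), ∀ t ≥ (0 : ℝ), T (s + t) = (T s).comp (T t)) {u y : X} {a c : ℝ}
    (hderiv : HasDerivAt (fun t => T t u) y a) (ha : 0 < a) (hc : 0 ≤ c) :
    HasDerivAt (fun t => T t u) (T c y) (c + a) := by
  have hshift : HasDerivAt (fun t => T c (T (t - c) u)) (T c y) (c + a) := by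
    refine (T c).hasFDerivAt.comp_hasDerivAt _
      (HasDerivAt.comp_sub_const (f := fun s => T s u) _ c ?_)
    rwa [add_sub_cancel_left]
  refine hshift.congr_of_eventuallyEq ?_
  filter_upwards [Ioi_mem_nhds (show c < c + a by linarith)] with t (ht : c < t)
  rw [← semigroup_apply_add hT hc (by linarith), add_sub_cancel]

lemma semigroup_orbit_sub_eq_integral [CompleteSpace X]
    (hT : ∀ s ≥ (0 : ℝ), ∀ t ≥ (0 : ℝ), T (s + t) = (T s).comp (T t)) {u w : X} {a h : ℝ}
    (hw : ContinuousOn (fun t => T t w) (Ici 0)) (hderiv : HasDerivAt (fun t => T t u) (T a w) a)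
    (ha : 0 < a) (hinj : Function.Injective (T a)) (hh : 0 ≤ h) :
    T h u - u = ∫ r in (0 : ℝ)..h, T r w := by
  have hderiv_shift : ∀ r ∈ uIcc 0 h, HasDerivAt (fun r => T (a + r) u) (T a (T r w)) r := by
    intro r hr
    have hr0 : 0 ≤ r := by rw [uIcc_of_le hh] at hr; exact hr.1
    rw [← semigroup_apply_comm hT hr0 ha.le]
    exact HasDerivAt.comp_const_add a r (add_comm a r ▸ hderiv.semigroup_orbit_add hT ha hr0)
  have hw' : ContinuousOn (fun r => T r w) (uIcc 0 h) :=
    hw.mono (by rw [uIcc_of_le hh]; exact Icc_subset_Ici_self)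
  have hftc := intervalIntegral.integral_eq_sub_of_hasDerivAt hderiv_shift
    ((T a).continuous.comp_continuousOn hw').intervalIntegrable
  apply hinj
  rw [← (T a).intervalIntegral_comp_comm hw'.intervalIntegrable, hftc, add_zero,
    semigroup_orbit_add_sub hT ha.le hh]

end Semigroup

lemma tendsto_inv_smul_intervalIntegral_nhdsGT {E : Type*} [NormedAddCommGroup E]
    [NormedSpace ℝ E] [CompleteSpace E] {f : ℝ → E} (hf : ContinuousOn f (Ici 0)) :
    Tendsto (fun h : ℝ => h⁻¹ • ∫ r in (0 : ℝ)..h, f r) (𝓝[>] 0) (𝓝 (f 0)) := by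
  have hF : HasDerivWithinAt (fun h : ℝ => ∫ r in (0 : ℝ)..h, f r) (f 0) (Ici 0) 0 :=
    intervalIntegral.integral_hasDerivWithinAt_right (by simp)
      ((hf.mono Ioi_subset_Ici_self).stronglyMeasurableAtFilter_nhdsWithin measurableSet_Ioi 0)
      ((hf 0 self_mem_Ici).mono Ioi_subset_Ici_self)
  rw [hasDerivWithinAt_iff_tendsto_slope, Ici_sdiff_left] at hF
  refine hF.congr fun h => ?_
  rw [slope_def_module, intervalIntegral.integral_same, sub_zero, sub_zero]

/-- Membership criterion for the generator of a C₀-semigroup (Proposition 5.1). -/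
theorem stmt5 {X : Type*} [NormedAddCommGroup X] [NormedSpace ℝ X] [CompleteSpace X]
    (T : ℝ → X →L[ℝ] X)
    (hT0 : T 0 = 1)
    (hTadd : ∀ s ≥ (0:ℝ), ∀ t ≥ (0:ℝ), T (s + t) = (T s).comp (T t))
    (hTcont : ∀ w : X, ContinuousOn (fun t => T t w) (Set.Ici 0))
    (u y : X)
    (hdiff : HasDerivWithinAt (fun t => T t u) y (Set.Ici 0) 1)
    (hinj : Function.Injective (T 1)) :
    (∃ L : X, Filter.Tendsto (fun h : ℝ => h⁻¹ • (T h u - u))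
        (nhdsWithin 0 (Set.Ioi 0)) (nhds L))
      ↔ y ∈ Set.range (T 1) := by
  have hderiv : HasDerivAt (fun t => T t u) y 1 := hdiff.hasDerivAt (Ici_mem_nhds one_pos)
  constructor
  · rintro ⟨L, hL⟩
    exact ⟨L, tendsto_nhds_unique (tendsto_semigroup_slope_of_tendsto_slope_zero hTadd
      zero_le_one hL) hderiv.tendsto_slope_zero_right⟩
  · rintro ⟨w, rfl⟩
    refine ⟨w, ?_⟩
    have hlim := tendsto_inv_smul_intervalIntegral_nhdsGT (hTcont w)
    rw [hT0, one_apply_eq_self] at hlim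
    refine hlim.congr' ?_
    filter_upwards [self_mem_nhdsWithin] with h (hh : 0 < h)
    rw [semigroup_orbit_sub_eq_integral hTadd (hTcont w) hderiv one_pos hinj hh.le]
end

section
/- Optimization core lemma for logarithmic rates: Let p ≥ 0 be real, ν ≥ 1 an integer, and δ₀ ∈ (0,1). There exists a constant C > 0, depending only on p, ν and δ₀, such that for all M ≥ 0, c ≥ 0, δ ∈ (0, δ₀] and N ≥ 0: if N ≤ M α^p (log(1/α))^{−ν} + c δ/α for every α ∈ (0,1), then N ≤ C max(M, c) δ^{p/(p+1)} (log(1/δ))^{−ν/(p+1)}. -/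
/-! Write `L = log (1 / δ)`. When `L` is large, test the hypothesis at the scale `α` with
`α ^ (p + 1) = δ * L ^ ν`: there `α ^ p / L ^ ν` and `δ / α` both equal
`δ ^ (p / (p + 1)) / L ^ (ν / (p + 1))`, and `log (1 / α) = (L - ν log L) / (p + 1)` is at least
`L / (2 (p + 1))` once `L > 16 ν²`, so replacing `log (1 / α)` by `L` costs only the factor
`(2 (p + 1)) ^ ν`. When `L` is bounded, `δ` stays away from `0`, the rate is bounded below, and the
test point `α = 1 / 2` already bounds `N` by a multiple of `max M c`. -/

open Real Set

lemma mul_log_le_half_self {a x : ℝ} (ha : 0 ≤ a) (hx : 16 * a ^ 2 ≤ x) : a * log x ≤ x / 2 := by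
  have hx0 : 0 ≤ x := le_trans (by positivity) hx
  have hlog : log x ≤ 2 * √x :=
    calc log x ≤ x ^ (1 / 2 : ℝ) / (1 / 2) := log_le_rpow_div hx0 (by norm_num)
      _ = 2 * √x := by rw [← sqrt_eq_rpow]; ring
  have hsqrt : 4 * a ≤ √x := le_sqrt_of_sq_le (by linarith)
  calc a * log x ≤ a * (2 * √x) := mul_le_mul_of_nonneg_left hlog ha
    _ ≤ √x / 4 * (2 * √x) := by gcongr; linarith
    _ = x / 2 := by linear_combination (1 / 2 : ℝ) * mul_self_sqrt hx0

noncomputable def logRate (p : ℝ) (ν : ℕ) (δ : ℝ) : ℝ :=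
  δ ^ (p / (p + 1)) / log (1 / δ) ^ ((ν : ℝ) / (p + 1))

noncomputable def balancedScale (p : ℝ) (ν : ℕ) (δ : ℝ) : ℝ :=
  δ ^ (1 / (p + 1)) * log (1 / δ) ^ ((ν : ℝ) / (p + 1))

section balancedScale

variable {p δ : ℝ} {ν : ℕ}

lemma balancedScale_pos (hδ : 0 < δ) (hL : 0 < log (1 / δ)) : 0 < balancedScale p ν δ := by
  unfold balancedScale; positivity

lemma div_balancedScale (hp : 0 < p + 1) (hδ : 0 < δ) (hL : 0 < log (1 / δ)) :
    δ / balancedScale p ν δ = logRate p ν δ := by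
  have hsplit : δ = δ ^ (p / (p + 1)) * δ ^ (1 / (p + 1)) := by
    rw [← rpow_add hδ, ← add_div, div_self hp.ne', rpow_one]
  have : 0 < δ ^ (1 / (p + 1)) := by positivity
  rw [balancedScale, logRate]
  nth_rewrite 1 [hsplit]
  field_simp

lemma balancedScale_rpow_div_pow (hp : 0 < p + 1) (hδ : 0 < δ) (hL : 0 < log (1 / δ)) :
    balancedScale p ν δ ^ p / log (1 / δ) ^ ν = logRate p ν δ := by
  have hexp : (ν : ℝ) / (p + 1) * p = ν - ν / (p + 1) := by field_simp; ring
  rw [balancedScale, logRate, mul_rpow (by positivity) (by positivity), ← rpow_mul hδ.le,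
    ← rpow_mul hL.le, hexp, rpow_sub hL, rpow_natCast, one_div_mul_eq_div]
  have : 0 < log (1 / δ) ^ ν := by positivity
  field_simp

lemma log_one_div_balancedScale (hδ : 0 < δ) (hL : 0 < log (1 / δ)) :
    log (1 / balancedScale p ν δ) = (log (1 / δ) - ν * log (log (1 / δ))) / (p + 1) := by
  rw [balancedScale, one_div (_ * _), log_inv, log_mul (by positivity) (by positivity),
    log_rpow hδ, log_rpow hL, one_div δ, log_inv]
  ring

end balancedScale

section bounds

variable {p δ M c N : ℝ} {ν : ℕ}

lemma le_mul_logRate_of_sq_lt_log (hp : 0 < p + 1) (hδ : 0 < δ)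
    (hL : 16 * (ν : ℝ) ^ 2 < log (1 / δ)) (hM : 0 ≤ M)
    (h : ∀ α ∈ Ioo (0:ℝ) 1, N ≤ M * α ^ p / log (1 / α) ^ ν + c * δ / α) :
    N ≤ ((2 * (p + 1)) ^ ν * M + c) * logRate p ν δ := by
  set L := log (1 / δ)
  set α := balancedScale p ν δ
  have hL0 : 0 < L := lt_of_le_of_lt (by positivity) hL
  have hα0 : 0 < α := balancedScale_pos hδ hL0
  have hlogα : L / (2 * (p + 1)) ≤ log (1 / α) := by
    rw [log_one_div_balancedScale hδ hL0, ← div_div, div_le_div_iff_of_pos_right hp]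
    linarith [mul_log_le_half_self (Nat.cast_nonneg ν) hL.le]
  have hα1 : α < 1 := by
    have : 0 < log (1 / α) := lt_of_lt_of_le (by positivity) hlogα
    rwa [one_div, log_inv, neg_pos, log_neg_iff hα0] at this
  have hfirst : M * α ^ p / log (1 / α) ^ ν ≤ (2 * (p + 1)) ^ ν * M * logRate p ν δ :=
    calc M * α ^ p / log (1 / α) ^ ν ≤ M * α ^ p / (L / (2 * (p + 1))) ^ ν := by gcongr
      _ = (2 * (p + 1)) ^ ν * M * (α ^ p / L ^ ν) := by
        rw [div_pow]; field_simp
      _ = (2 * (p + 1)) ^ ν * M * logRate p ν δ := by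
        rw [balancedScale_rpow_div_pow hp hδ hL0]
  calc N ≤ M * α ^ p / log (1 / α) ^ ν + c * δ / α := h α ⟨hα0, hα1⟩
    _ ≤ (2 * (p + 1)) ^ ν * M * logRate p ν δ + c * logRate p ν δ := by
      rw [mul_div_assoc c, div_balancedScale hp hδ hL0]; gcongr
    _ = ((2 * (p + 1)) ^ ν * M + c) * logRate p ν δ := by ring

lemma le_mul_max_of_half (hp : 0 ≤ p) (hδ0 : 0 ≤ δ) (hδ : δ ≤ 1) (hM : 0 ≤ M)
    (h : ∀ α ∈ Ioo (0:ℝ) 1, N ≤ M * α ^ p / log (1 / α) ^ ν + c * δ / α) :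
    N ≤ ((log 2)⁻¹ ^ ν + 2) * max M c := by
  have hhalf := h (1 / 2) ⟨by norm_num, by norm_num⟩
  rw [one_div_one_div] at hhalf
  have hpow : (1 / 2 : ℝ) ^ p ≤ 1 := rpow_le_one (by norm_num) (by norm_num) hp
  have hlog2 : 0 < log 2 := log_pos (by norm_num)
  calc N ≤ M * (1 / 2) ^ p / log 2 ^ ν + c * δ / (1 / 2) := hhalf
    _ = M * (1 / 2) ^ p * (log 2)⁻¹ ^ ν + 2 * (c * δ) := by ring
    _ ≤ max M c * 1 * (log 2)⁻¹ ^ ν + 2 * (max M c * 1) := by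
      gcongr
      exacts [le_max_left M c, le_max_right M c]
    _ = ((log 2)⁻¹ ^ ν + 2) * max M c := by ring

lemma exp_neg_div_pow_le_logRate {B : ℝ} (hp : 0 ≤ p) (hδ : 0 < δ) (hδ1 : δ < 1)
    (hB : 1 ≤ B) (hLB : log (1 / δ) ≤ B) : exp (-B) / B ^ ν ≤ logRate p ν δ := by
  have hL : 0 < log (1 / δ) := log_pos (one_lt_one_div hδ hδ1)
  have hq : 0 < p + 1 := by linarith
  have hnum : exp (-B) ≤ δ ^ (p / (p + 1)) :=
    calc exp (-B) ≤ δ := by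
          rw [one_div, log_inv] at hLB; rw [← exp_log hδ, exp_le_exp]; linarith
      _ ≤ δ ^ (p / (p + 1)) := by
          conv_lhs => rw [← rpow_one δ]
          exact rpow_le_rpow_of_exponent_ge hδ hδ1.le (by rw [div_le_one hq]; linarith)
  have hden : log (1 / δ) ^ ((ν : ℝ) / (p + 1)) ≤ B ^ ν :=
    calc log (1 / δ) ^ ((ν : ℝ) / (p + 1)) ≤ B ^ ((ν : ℝ) / (p + 1)) := by gcongr
      _ ≤ B ^ (ν : ℝ) := rpow_le_rpow_of_exponent_le hB (div_le_self (by positivity) (by linarith))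
      _ = B ^ ν := rpow_natCast B ν
  unfold logRate
  gcongr

end bounds

theorem stmt6_general (p : ℝ) (ν : ℕ) (δ₀ : ℝ) (hp : 0 ≤ p)
    (hδ₀ : δ₀ ∈ Set.Ioo (0:ℝ) 1) :
    ∃ C > (0:ℝ), ∀ M c δ N : ℝ, 0 ≤ M → 0 ≤ c → δ ∈ Set.Ioc 0 δ₀ → 0 ≤ N →
      (∀ α ∈ Set.Ioo (0:ℝ) 1,
        N ≤ M * α ^ p / (Real.log (1 / α)) ^ ν + c * δ / α) →
      N ≤ C * max M c * δ ^ (p / (p + 1)) / (Real.log (1 / δ)) ^ ((ν : ℝ) / (p + 1)) := by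
  set B : ℝ := 16 * (ν : ℝ) ^ 2 + 1
  set K : ℝ := (log 2)⁻¹ ^ ν + 2
  have hB : 1 ≤ B := le_add_of_nonneg_left (by positivity)
  set C := max ((2 * (p + 1)) ^ ν + 1) (K * exp B * B ^ ν)
  refine ⟨C, lt_max_of_lt_left (by positivity), ?_⟩
  rintro M c δ N hM - ⟨hδ, hδδ₀⟩ - h
  have hδ1 : δ < 1 := hδδ₀.trans_lt hδ₀.2
  have hrate : 0 ≤ logRate p ν δ := by
    have := log_pos (one_lt_one_div hδ hδ1); unfold logRate; positivity
  have hmax : 0 ≤ max M c := hM.trans (le_max_left M c)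
  rw [mul_div_assoc, ← logRate]
  rcases le_or_gt (log (1 / δ)) B with hLB | hBL
  · have hB0 : 0 < B ^ ν := by positivity
    calc N ≤ K * max M c := le_mul_max_of_half hp hδ.le hδ1.le hM h
      _ = K * exp B * B ^ ν * max M c * (exp (-B) / B ^ ν) := by
        rw [exp_neg]; field_simp
      _ ≤ C * max M c * logRate p ν δ := by
        gcongr
        · exact le_max_right _ _
        · exact exp_neg_div_pow_le_logRate hp hδ hδ1 hB hLB
  · calc N ≤ ((2 * (p + 1)) ^ ν * M + c) * logRate p ν δ :=
          le_mul_logRate_of_sq_lt_log (by linarith) hδ (by linarith) hM h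
      _ ≤ ((2 * (p + 1)) ^ ν * max M c + max M c) * logRate p ν δ := by
        gcongr
        exacts [le_max_left M c, le_max_right M c]
      _ ≤ C * max M c * logRate p ν δ := by
        rw [← add_one_mul]
        gcongr
        exact le_max_left _ _

/-- Optimization core lemma for logarithmic rates. -/
theorem stmt6 (p : ℝ) (ν : ℕ) (δ₀ : ℝ) (hp : 0 ≤ p) (hν : 1 ≤ ν)
    (hδ₀ : δ₀ ∈ Set.Ioo (0:ℝ) 1) :
    ∃ C > (0:ℝ), ∀ M c δ N : ℝ, 0 ≤ M → 0 ≤ c → δ ∈ Set.Ioc 0 δ₀ → 0 ≤ N →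
      (∀ α ∈ Set.Ioo (0:ℝ) 1,
        N ≤ M * α ^ p / (Real.log (1 / α)) ^ ν + c * δ / α) →
      N ≤ C * max M c * δ ^ (p / (p + 1)) / (Real.log (1 / δ)) ^ ((ν : ℝ) / (p + 1)) :=
  stmt6_general p ν δ₀ hp hδ₀
end

section
/- Asymptotics of the inverse index function (Appendix, item (b)): Let q > 0 and μ > 0, and let χ(t) = t^q (log(1/t))^{−μ} for t ∈ (0,1). If ψ : (0, s₀) → (0,1) is any function satisfying χ(ψ(s)) = s for all s ∈ (0, s₀) (for some s₀ > 0), then ψ(s) / (q^{−μ/q} s^{1/q} (log(1/s))^{μ/q}) → 1 as s → 0⁺. -/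
/-!
Write `L = log (1 / ψ s)`. Taking logarithms and `1/q`-th powers in `χ (ψ s) = s` gives
`log (1 / s) = q L + μ log L` and `s ^ (1/q) = ψ s · L ^ (-μ/q)`, so the quotient in question is
exactly `(q L / (q L + μ log L)) ^ (μ/q)`. Since `log L ≤ L`, also `log (1 / s) ≤ (q + μ) L`,
hence `L → ∞` as `s → 0⁺`, and the quotient tends to `1` because `log L = o(L)`.
-/

open Filter Real Set Topology

/-- The index function `χ` of the paper. -/
noncomputable def indexFun (q μ t : ℝ) : ℝ := t ^ q * log (1 / t) ^ (-μ)

lemma tendsto_div_add_mul_log_rpow_atTop (a b p : ℝ) (ha : a ≠ 0) :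
    Tendsto (fun x : ℝ => (a * x / (a * x + b * log x)) ^ p) atTop (𝓝 1) := by
  have hbase : Tendsto (fun x : ℝ => (1 + b / a * (log x / x))⁻¹) atTop (𝓝 1) := by
    simpa using ((isLittleO_log_id_atTop.tendsto_div_nhds_zero.const_mul (b / a)).const_add
      1).inv₀ (by simp)
  have hpow := hbase.rpow_const (p := p) (Or.inl one_ne_zero)
  rw [one_rpow] at hpow
  refine hpow.congr' ?_
  filter_upwards [eventually_gt_atTop 0] with x hx
  rw [← inv_div (a * x + b * log x)]
  field_simp

section IndexFun

variable {q μ t : ℝ}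

lemma log_one_div_indexFun (ht₀ : 0 < t) (ht₁ : t < 1) :
    log (1 / indexFun q μ t) = q * log (1 / t) + μ * log (log (1 / t)) := by
  have hL : 0 < log (1 / t) := log_pos (one_lt_one_div ht₀ ht₁)
  rw [indexFun, one_div, log_inv, log_mul (by positivity) (by positivity), log_rpow ht₀,
    log_rpow hL, one_div, log_inv]
  ring

lemma log_one_div_indexFun_le (hμ : 0 ≤ μ) (ht₀ : 0 < t) (ht₁ : t < 1) :
    log (1 / indexFun q μ t) ≤ (q + μ) * log (1 / t) := by
  have hL : 0 < log (1 / t) := log_pos (one_lt_one_div ht₀ ht₁)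
  have hlogL : log (log (1 / t)) ≤ log (1 / t) := (log_le_sub_one_of_pos hL).trans (by linarith)
  rw [log_one_div_indexFun ht₀ ht₁]
  nlinarith

lemma indexFun_rpow_one_div (hq : q ≠ 0) (ht₀ : 0 < t) (ht₁ : t < 1) :
    indexFun q μ t ^ (1 / q) = t * log (1 / t) ^ (-(μ / q)) := by
  have hL : 0 < log (1 / t) := log_pos (one_lt_one_div ht₀ ht₁)
  rw [indexFun, mul_rpow (by positivity) (by positivity), ← rpow_mul ht₀.le, ← rpow_mul hL.le,
    mul_one_div_cancel hq, rpow_one, mul_one_div, neg_div]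

lemma div_indexFun_asymptotic_eq (hq : 0 < q) (ht₀ : 0 < t) (ht₁ : t < 1)
    (hχ : 0 < log (1 / indexFun q μ t)) :
    t / (q ^ (-μ / q) * indexFun q μ t ^ (1 / q) * log (1 / indexFun q μ t) ^ (μ / q)) =
      (q * log (1 / t) / (q * log (1 / t) + μ * log (log (1 / t)))) ^ (μ / q) := by
  have hL : 0 < log (1 / t) := log_pos (one_lt_one_div ht₀ ht₁)
  rw [log_one_div_indexFun ht₀ ht₁] at hχ ⊢
  rw [indexFun_rpow_one_div hq.ne' ht₀ ht₁, neg_div, rpow_neg hq.le, rpow_neg hL.le,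
    div_rpow (by positivity) hχ.le, mul_rpow hq.le hL.le]
  have : 0 < (q * log (1 / t) + μ * log (log (1 / t))) ^ (μ / q) := rpow_pos_of_pos hχ _
  field_simp

end IndexFun

/-- Asymptotics of the inverse index function (Appendix, item (b)). -/
theorem stmt9 (q μ : ℝ) (hq : 0 < q) (hμ : 0 < μ) (s₀ : ℝ) (hs₀ : 0 < s₀)
    (ψ : ℝ → ℝ)
    (hψ : ∀ s ∈ Set.Ioo (0:ℝ) s₀, ψ s ∈ Set.Ioo (0:ℝ) 1 ∧
      (ψ s) ^ q * (Real.log (1 / ψ s)) ^ (-μ) = s) :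
    Filter.Tendsto
      (fun s : ℝ => ψ s / (q ^ (-μ / q) * s ^ (1 / q) * (Real.log (1 / s)) ^ (μ / q)))
      (nhdsWithin 0 (Set.Ioi 0)) (nhds 1) := by
  have hsmall : ∀ᶠ s in 𝓝[>] (0 : ℝ), s ∈ Ioo 0 (min s₀ 1) :=
    Ioo_mem_nhdsGT (lt_min hs₀ one_pos)
  have hlog_s : Tendsto (fun s : ℝ => log (1 / s)) (𝓝[>] 0) atTop :=
    (tendsto_neg_atBot_atTop.comp tendsto_log_nhdsGT_zero).congr fun s => by
      simp [one_div, log_inv]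
  have hL : Tendsto (fun s => log (1 / ψ s)) (𝓝[>] 0) atTop := by
    refine tendsto_atTop_mono' _ ?_ (hlog_s.atTop_div_const (by positivity : 0 < q + μ))
    filter_upwards [hsmall] with s hs
    obtain ⟨⟨ht₀, ht₁⟩, hχ⟩ := hψ s ⟨hs.1, hs.2.trans_le (min_le_left _ _)⟩
    have hle := log_one_div_indexFun_le (q := q) hμ.le ht₀ ht₁
    rw [indexFun, hχ] at hle
    exact (div_le_iff₀' (by positivity)).2 hle
  refine ((tendsto_div_add_mul_log_rpow_atTop q μ (μ / q) hq.ne').comp hL).congr' ?_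
  filter_upwards [hsmall] with s hs
  obtain ⟨⟨ht₀, ht₁⟩, hχ⟩ := hψ s ⟨hs.1, hs.2.trans_le (min_le_left _ _)⟩
  have hlog_pos : 0 < log (1 / indexFun q μ (ψ s)) := by
    rw [indexFun, hχ]
    exact log_pos (one_lt_one_div hs.1 (hs.2.trans_le (min_le_right _ _)))
  have hquot := div_indexFun_asymptotic_eq hq ht₀ ht₁ hlog_pos
  rw [indexFun, hχ] at hquot
  exact hquot.symm
end

section
/- Qualification estimate for iterated Lavrentiev regularization (Example 2.2, decay estimate): Let A be of positive type with constant κ*, let m ≥ 1 be an integer, and for α > 0 set S_α := α^m B_α^m (the m-fold composition of αB_α). Then for every integer k with 0 ≤ k ≤ m and every α > 0, ‖S_α ∘ A^k‖ ≤ (κ* + 1)^m α^k. -/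
/-!
Write `S = α • B α`. From `B α (A + α) = 1 = (A + α) B α` the resolvent commutes with `A` and
`S A = α (1 - S)`, so `‖S‖ ≤ κ` and `‖S A‖ ≤ (1 + κ) α`. Since `S` and `A` commute,
`S ^ m A ^ k = S ^ (m - k) (S A) ^ k`, and submultiplicativity gives `κ ^ (m - k) ((κ + 1) α) ^ k`.
-/

section PowBounds

variable {R : Type*} [SeminormedRing R]

theorem norm_pow_le_of_norm_one_le (h₁ : ‖(1 : R)‖ ≤ 1) (a : R) : ∀ n : ℕ, ‖a ^ n‖ ≤ ‖a‖ ^ n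
  | 0 => by simpa using h₁
  | n + 1 => norm_pow_le' a n.succ_pos

theorem Commute.norm_pow_mul_pow_le (h₁ : ‖(1 : R)‖ ≤ 1) {s a : R} (hsa : Commute s a)
    {k m : ℕ} (hkm : k ≤ m) : ‖s ^ m * a ^ k‖ ≤ ‖s‖ ^ (m - k) * ‖s * a‖ ^ k := by
  have hsplit : s ^ m * a ^ k = s ^ (m - k) * (s * a) ^ k := by
    rw [hsa.mul_pow, ← mul_assoc, ← pow_add, Nat.sub_add_cancel hkm]
  rw [hsplit]
  exact (norm_mul_le _ _).trans <| mul_le_mul (norm_pow_le_of_norm_one_le h₁ _ _)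
    (norm_pow_le_of_norm_one_le h₁ _ _) (norm_nonneg _) (by positivity)

end PowBounds

section Resolvent

variable {R : Type*} [Ring R] [Algebra ℝ R] {a b : R} {c : ℝ}

theorem mul_eq_one_sub_smul_of_mul_add_eq_one (h : b * (a + c • 1) = 1) :
    b * a = 1 - c • b := by
  rw [mul_add, mul_smul_one] at h
  exact eq_sub_of_add_eq h

theorem mul_eq_one_sub_smul_of_add_mul_eq_one (h : (a + c • 1) * b = 1) :
    a * b = 1 - c • b := by
  rw [add_mul, smul_one_mul] at h
  exact eq_sub_of_add_eq h

theorem commute_of_inverse_add_smul_one (hr : (a + c • 1) * b = 1) (hl : b * (a + c • 1) = 1) :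
    Commute b a := by
  rw [Commute, SemiconjBy, mul_eq_one_sub_smul_of_mul_add_eq_one hl,
    mul_eq_one_sub_smul_of_add_mul_eq_one hr]

end Resolvent

section ResolventNorm

variable {R : Type*} [SeminormedRing R] [NormedAlgebra ℝ R] {a b : R} {c κ : ℝ}

theorem norm_smul_le_of_norm_le_div (hc : 0 < c) (hb : ‖b‖ ≤ κ / c) : ‖c • b‖ ≤ κ := by
  rw [norm_smul, Real.norm_of_nonneg hc.le]
  calc c * ‖b‖ ≤ c * (κ / c) := mul_le_mul_of_nonneg_left hb hc.le
    _ = κ := by field_simp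

theorem norm_smul_mul_le_of_mul_add_eq_one (h₁ : ‖(1 : R)‖ ≤ 1) (hl : b * (a + c • 1) = 1)
    (hc : 0 < c) (hb : ‖b‖ ≤ κ / c) : ‖(c • b) * a‖ ≤ (κ + 1) * c := by
  rw [smul_mul_assoc, mul_eq_one_sub_smul_of_mul_add_eq_one hl, norm_smul,
    Real.norm_of_nonneg hc.le, mul_comm]
  gcongr
  calc ‖1 - c • b‖ ≤ ‖(1 : R)‖ + ‖c • b‖ := norm_sub_le _ _
    _ ≤ κ + 1 := by linarith [norm_smul_le_of_norm_le_div hc hb]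

end ResolventNorm

theorem stmt12_general {X : Type*} [NormedAddCommGroup X] [NormedSpace ℝ X]
    (A : X →L[ℝ] X) (κst : ℝ) (B : ℝ → X →L[ℝ] X)
    (hB1 : ∀ α > (0:ℝ), (A + α • (1 : X →L[ℝ] X)).comp (B α) = 1)
    (hB2 : ∀ α > (0:ℝ), (B α).comp (A + α • (1 : X →L[ℝ] X)) = 1)
    (hBnorm : ∀ α > (0:ℝ), ‖B α‖ ≤ κst / α)
    (m : ℕ) :
    ∀ k : ℕ, k ≤ m → ∀ α > (0:ℝ),
      ‖((α • B α) ^ m).comp (A ^ k)‖ ≤ (κst + 1) ^ m * α ^ k := by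
  intro k hk α hα
  have h₁ : ‖(1 : X →L[ℝ] X)‖ ≤ 1 := ContinuousLinearMap.norm_id_le
  have hS : ‖α • B α‖ ≤ κst := norm_smul_le_of_norm_le_div hα (hBnorm α hα)
  have hSA : ‖(α • B α) * A‖ ≤ (κst + 1) * α :=
    norm_smul_mul_le_of_mul_add_eq_one h₁ (hB2 α hα) hα (hBnorm α hα)
  have hcomm : Commute (α • B α) A :=
    (commute_of_inverse_add_smul_one (hB1 α hα) (hB2 α hα)).smul_left α
  have hκ : 0 ≤ κst := (norm_nonneg _).trans hS
  calc ‖(α • B α) ^ m * A ^ k‖ ≤ ‖α • B α‖ ^ (m - k) * ‖(α • B α) * A‖ ^ k :=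
        hcomm.norm_pow_mul_pow_le h₁ hk
    _ ≤ (κst + 1) ^ (m - k) * ((κst + 1) * α) ^ k := by gcongr; linarith
    _ = (κst + 1) ^ m * α ^ k := by
        rw [mul_pow, ← mul_assoc, ← pow_add, Nat.sub_add_cancel hk]

/-- Qualification estimate for iterated Lavrentiev regularization
(Example 2.2, decay estimate). -/
theorem stmt12 {X : Type*} [NormedAddCommGroup X] [NormedSpace ℝ X]
    (A : X →L[ℝ] X) (κst : ℝ) (hκ : 0 < κst) (B : ℝ → X →L[ℝ] X)
    (hB1 : ∀ α > (0:ℝ), (A + α • (1 : X →L[ℝ] X)).comp (B α) = 1)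
    (hB2 : ∀ α > (0:ℝ), (B α).comp (A + α • (1 : X →L[ℝ] X)) = 1)
    (hBnorm : ∀ α > (0:ℝ), ‖B α‖ ≤ κst / α)
    (m : ℕ) (hm : 1 ≤ m) :
    ∀ k : ℕ, k ≤ m → ∀ α > (0:ℝ),
      ‖((α • B α) ^ m).comp (A ^ k)‖ ≤ (κst + 1) ^ m * α ^ k :=
  stmt12_general A κst B hB1 hB2 hBnorm m
end

section
/- Derivative of the Abel integral operator with respect to the order at α = 1 (identity (5.3), pointwise form): Let u : [0,1] → ℝ be continuous and let x ∈ (0,1]. Then the function α ↦ (1/Γ(α)) ∫₀^x (x−ξ)^{α−1} u(ξ) dξ, defined for α > 0, is differentiable at α = 1, and its derivative there equals ∫₀^x log(x−ξ) u(ξ) dξ − Γ'(1) ∫₀^x u(ξ) dξ, where Γ is Euler's gamma function and Γ'(1) its derivative at 1 (the negative of the Euler–Mascheroni constant). -/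
/-!
Differentiate under the integral sign: for `t = x - ξ ∈ (0, 1)` and `α` near `α₀`, the
`α`-derivative `log t * t ^ (α - 1)` of the kernel is dominated by `t ^ (α₀ / 4 - 1)` up to a
constant, which is integrable near `t = 0`. At `α = 1` the kernel is `1` and `1 / Γ` has
derivative `-Γ'(1)`, so the product rule gives the formula.
-/

open MeasureTheory Real Set

lemma abs_log_le_rpow_neg_div {t ε : ℝ} (ht : 0 < t) (ht1 : t ≤ 1) (hε : 0 < ε) :
    |log t| ≤ t ^ (-ε) / ε := by
  have h := abs_log_mul_self_rpow_lt t ε ht ht1 hε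
  have htε : 0 < t ^ ε := rpow_pos_of_pos ht ε
  rw [abs_mul, abs_of_pos htε, lt_div_iff₀ hε] at h
  rw [rpow_neg ht.le, le_div_iff₀ hε, ← one_div, le_div_iff₀ htε]
  linarith [mul_right_comm |log t| ε (t ^ ε)]

lemma abs_log_mul_rpow_sub_one_le {t α α₀ : ℝ} (ht : 0 < t) (ht1 : t ≤ 1) (hα₀ : 0 < α₀)
    (hα : α ∈ Metric.ball α₀ (α₀ / 2)) :
    |log t * t ^ (α - 1)| ≤ 4 / α₀ * t ^ (α₀ / 4 - 1) := by
  have hα' : α₀ / 2 - 1 ≤ α - 1 := by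
    rw [Metric.mem_ball, dist_eq] at hα
    linarith [(abs_lt.1 hα).1]
  have hlog : |log t| ≤ t ^ (-(α₀ / 4)) / (α₀ / 4) :=
    abs_log_le_rpow_neg_div ht ht1 (by positivity)
  have hpow : t ^ (α - 1) ≤ t ^ (α₀ / 2 - 1) := rpow_le_rpow_of_exponent_ge ht ht1 hα'
  calc |log t * t ^ (α - 1)| = |log t| * t ^ (α - 1) := by
        rw [abs_mul, abs_of_pos (rpow_pos_of_pos ht _)]
    _ ≤ t ^ (-(α₀ / 4)) / (α₀ / 4) * t ^ (α₀ / 2 - 1) :=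
        mul_le_mul hlog hpow (rpow_pos_of_pos ht _).le (by positivity)
    _ = 4 / α₀ * (t ^ (-(α₀ / 4)) * t ^ (α₀ / 2 - 1)) := by field_simp
    _ = 4 / α₀ * t ^ (α₀ / 4 - 1) := by rw [← rpow_add ht]; ring_nf

lemma integrableOn_sub_rpow_Ioc (x : ℝ) {r : ℝ} (hr : -1 < r) :
    IntegrableOn (fun ξ : ℝ => (x - ξ) ^ r) (Ioc 0 x) := by
  simpa using ((intervalIntegral.intervalIntegrable_rpow' (a := x) (b := 0) hr).comp_sub_left x).1

theorem hasDerivAt_integral_sub_rpow_mul {u : ℝ → ℝ} {x α₀ M : ℝ} (hx1 : x ≤ 1) (hα₀ : 0 < α₀)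
    (hu : AEStronglyMeasurable u (volume.restrict (Ioc 0 x)))
    (hM : ∀ ξ ∈ Ioc 0 x, ‖u ξ‖ ≤ M) :
    HasDerivAt (fun α => ∫ ξ in Ioc 0 x, (x - ξ) ^ (α - 1) * u ξ)
      (∫ ξ in Ioc 0 x, log (x - ξ) * ((x - ξ) ^ (α₀ - 1) * u ξ)) α₀ := by
  have hae : ∀ᵐ ξ ∂volume.restrict (Ioc 0 x), ξ ∈ Ioo 0 x := by
    rw [← Measure.restrict_congr_set Ioo_ae_eq_Ioc]
    exact ae_restrict_mem measurableSet_Ioo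
  have hu_bdd : ∀ᵐ ξ ∂volume.restrict (Ioc 0 x), ‖u ξ‖ ≤ M :=
    ae_restrict_of_forall_mem measurableSet_Ioc hM
  have hkernel_meas : ∀ r : ℝ,
      AEStronglyMeasurable (fun ξ : ℝ => (x - ξ) ^ r) (volume.restrict (Ioc 0 x)) := fun r =>
    ((measurable_const.sub measurable_id).pow_const r).aestronglyMeasurable
  have hlog_meas : AEStronglyMeasurable (fun ξ : ℝ => log (x - ξ)) (volume.restrict (Ioc 0 x)) :=
    (measurable_log.comp (measurable_const.sub measurable_id)).aestronglyMeasurable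
  refine (hasDerivAt_integral_of_dominated_loc_of_deriv_le
    (F := fun α ξ => (x - ξ) ^ (α - 1) * u ξ)
    (F' := fun α ξ => log (x - ξ) * ((x - ξ) ^ (α - 1) * u ξ))
    (bound := fun ξ => 4 / α₀ * M * (x - ξ) ^ (α₀ / 4 - 1))
    (Metric.ball_mem_nhds α₀ (half_pos hα₀))
    (.of_forall fun α => (hkernel_meas _).mul hu)
    ((integrableOn_sub_rpow_Ioc x (by linarith)).mul_bdd hu hu_bdd)
    (hlog_meas.mul ((hkernel_meas _).mul hu)) ?_
    ((integrableOn_sub_rpow_Ioc x (by linarith)).const_mul _) ?_).2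
  · filter_upwards [hae, hu_bdd] with ξ hξ huξ α hα
    have ht : 0 < x - ξ := sub_pos.2 hξ.2
    have ht1 : x - ξ ≤ 1 := by linarith [hξ.1]
    calc ‖log (x - ξ) * ((x - ξ) ^ (α - 1) * u ξ)‖
        = |log (x - ξ) * (x - ξ) ^ (α - 1)| * ‖u ξ‖ := by
          rw [← mul_assoc, norm_mul, Real.norm_eq_abs]
      _ ≤ 4 / α₀ * (x - ξ) ^ (α₀ / 4 - 1) * M :=
          mul_le_mul (abs_log_mul_rpow_sub_one_le ht ht1 hα₀ hα) huξ (norm_nonneg _)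
            (by positivity)
      _ = 4 / α₀ * M * (x - ξ) ^ (α₀ / 4 - 1) := by ring
  · filter_upwards [hae] with ξ hξ α _
    have ht : 0 < x - ξ := sub_pos.2 hξ.2
    have hkernel :
        HasDerivAt (fun β : ℝ => (x - ξ) ^ (β - 1)) ((x - ξ) ^ (α - 1) * log (x - ξ)) α := by
      simpa [Function.comp_def] using (hasStrictDerivAt_const_rpow ht (α - 1)).hasDerivAt.comp α
        ((hasDerivAt_id α).sub_const 1)
    exact (hkernel.mul_const (u ξ)).congr_deriv (by ring)

lemma hasDerivAt_one_div_Gamma {s : ℝ} (hs : 0 < s) :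
    HasDerivAt (fun α => 1 / Gamma α) (-deriv Gamma s / Gamma s ^ 2) s := by
  have hΓ : DifferentiableAt ℝ Gamma s :=
    differentiableAt_Gamma fun n hn => by linarith [(Nat.cast_nonneg n : (0 : ℝ) ≤ n)]
  simp only [one_div]
  exact hΓ.hasDerivAt.inv (Gamma_pos_of_pos hs).ne'

/-- Derivative of the Abel integral operator with respect to the order at α = 1
(identity (5.3), pointwise form). -/
theorem stmt14 (u : ℝ → ℝ) (hu : ContinuousOn u (Set.Icc 0 1))
    (x : ℝ) (hx : x ∈ Set.Ioc (0:ℝ) 1) :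
    HasDerivAt
      (fun α : ℝ =>
        (1 / Real.Gamma α) * ∫ ξ in Set.Ioc (0:ℝ) x, (x - ξ) ^ (α - 1) * u ξ)
      ((∫ ξ in Set.Ioc (0:ℝ) x, Real.log (x - ξ) * u ξ)
        - deriv Real.Gamma 1 * ∫ ξ in Set.Ioc (0:ℝ) x, u ξ) 1 := by
  have hsub : Ioc 0 x ⊆ Icc 0 1 := fun ξ hξ => ⟨hξ.1.le, hξ.2.trans hx.2⟩
  obtain ⟨M, hM⟩ := isCompact_Icc.exists_bound_of_continuousOn hu
  have hintegral := hasDerivAt_integral_sub_rpow_mul hx.2 one_pos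
    ((hu.mono hsub).aestronglyMeasurable measurableSet_Ioc) fun ξ hξ => hM ξ (hsub hξ)
  refine ((hasDerivAt_one_div_Gamma one_pos).mul hintegral).congr_deriv ?_
  simp only [Gamma_one, sub_self, rpow_zero, one_mul]
  ring
end

section
/- Differentiability of the logarithmic Volterra transform (Section 5): Fix 0 < c < 1 and κ > 1, let u(ξ) = (−log(cξ))^{−κ} for ξ ∈ (0,1] with u(0) = 0, and let u'(ξ) = κ (−log(cξ))^{−κ−1} / ξ. Then the function F(x) = ∫₀^x log(x−ξ) u(ξ) dξ is differentiable at every x ∈ (0,1], with F'(x) = ∫₀^x log(x−ξ) u'(ξ) dξ (and this latter integral exists as a Lebesgue integral for every x ∈ (0,1]). -/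
/-!
Substituting `ξ = y τ` turns `F y = ∫_{(0,y]} log (y - ξ) u ξ dξ` into an integral over the fixed
interval `(0,1)` whose integrand is differentiable in `y` with derivative
`log (y - y τ) u (y τ) + u (y τ) + log (y - y τ) · (y τ) u' (y τ)`. Because `ξ u' ξ` stays
bounded, this derivative is dominated by `C (1 + |log (1 - τ)|)`, so one may differentiate under
the integral sign. Scaling back, the integration by parts against `(x - ξ) log (x - ξ) u ξ`, whose
boundary terms vanish since `u 0 = 0`, identifies the result with `∫_{(0,x]} log (x - ξ) u' ξ dξ`.
For `u ξ = (-log (c ξ))^(-κ)` one has `ξ u' ξ = κ (-log (c ξ))^(-κ-1)`, bounded on `(0, b)` for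
any `b < c⁻¹`, and `u' ≥ 0` makes `u'` integrable.
-/

open MeasureTheory Set Filter Topology Real

section LogKernel

variable {u u' : ℝ → ℝ} {b x : ℝ}

theorem intervalIntegrable_log_sub (x p q : ℝ) :
    IntervalIntegrable (fun ξ => log (x - ξ)) volume p q := by
  simpa using (intervalIntegral.intervalIntegrable_log' (a := x - p) (b := x - q)).comp_sub_left x

theorem integral_Ioc_zero_eq_mul_integral_Ioo_zero_one (g : ℝ → ℝ) {y : ℝ} (hy : 0 ≤ y) :
    ∫ ξ in Ioc 0 y, g ξ = y * ∫ τ in Ioo 0 1, g (y * τ) := by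
  rw [← integral_Ioc_eq_integral_Ioo, ← intervalIntegral.integral_of_le zero_le_one,
    ← intervalIntegral.integral_of_le hy, ← smul_eq_mul,
    intervalIntegral.smul_integral_comp_mul_left, mul_zero, mul_one]

theorem integrableOn_log_sub_mul {g : ℝ → ℝ} (hx : 0 < x) (hg : IntegrableOn g (Ioc 0 x))
    (hgc : ContinuousOn g (Ioc 0 x)) :
    IntegrableOn (fun ξ => log (x - ξ) * g ξ) (Ioc 0 x) := by
  rw [← Ioc_union_Ioc_eq_Ioc (half_pos hx).le (half_le_self hx.le)]
  refine IntegrableOn.union ?_ ?_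
  · have hlog : ContinuousOn (fun ξ => log (x - ξ)) (Icc 0 (x / 2)) :=
      (continuous_const.sub continuous_id).continuousOn.log fun ξ hξ =>
        (sub_pos.2 (by linarith [hξ.2] : ξ < x)).ne'
    exact IntegrableOn.continuousOn_mul_of_subset hlog (hg.mono_set (Ioc_subset_Ioc_right
      (half_le_self hx.le))) isCompact_Icc measurableSet_Ioc Ioc_subset_Icc_self
  · exact IntegrableOn.mul_continuousOn_of_subset
      ((intervalIntegrable_iff_integrableOn_Ioc_of_le (half_le_self hx.le)).1
        (intervalIntegrable_log_sub x (x / 2) x))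
      (hgc.mono (Icc_subset_Ioc (half_pos hx) le_rfl)) measurableSet_Ioc isCompact_Icc
      Ioc_subset_Icc_self

theorem integral_log_sub_mul_add_eq (hx : 0 < x) (hu : ContinuousOn u (Icc 0 x)) (hu0 : u 0 = 0)
    (hderiv : ∀ ξ ∈ Ioo 0 x, HasDerivAt u (u' ξ) ξ) (hu' : IntegrableOn u' (Ioc 0 x))
    (hlogu' : IntegrableOn (fun ξ => log (x - ξ) * u' ξ) (Ioc 0 x)) :
    ∫ ξ in Ioc 0 x, (log (x - ξ) * u ξ + u ξ + log (x - ξ) * (ξ * u' ξ)) =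
      x * ∫ ξ in Ioc 0 x, log (x - ξ) * u' ξ := by
  set Ψ' : ℝ → ℝ := fun ξ => (x - ξ) * log (x - ξ) * u' ξ - (log (x - ξ) + 1) * u ξ
  have hΨ : ∀ ξ ∈ Ioo 0 x, HasDerivAt (fun ξ => (x - ξ) * log (x - ξ) * u ξ) (Ψ' ξ) ξ := by
    intro ξ hξ
    have hmul_log : HasDerivAt (fun ξ => (x - ξ) * log (x - ξ)) ((log (x - ξ) + 1) * -1) ξ :=
      (hasDerivAt_mul_log (sub_ne_zero.2 hξ.2.ne')).comp ξ ((hasDerivAt_id' (x := ξ)).const_sub x)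
    exact (hmul_log.fun_mul (hderiv ξ hξ)).congr_deriv (by simp only [Ψ']; ring)
  have hΨ'_int : IntegrableOn Ψ' (Ioc 0 x) := by
    have h₁ : IntegrableOn (fun ξ => (x - ξ) * log (x - ξ) * u' ξ) (Ioc 0 x) :=
      IntegrableOn.continuousOn_mul_of_subset
        (continuous_mul_log.comp (continuous_const.sub continuous_id)).continuousOn hu'
        isCompact_Icc measurableSet_Ioc Ioc_subset_Icc_self
    have h₂ : IntegrableOn (fun ξ => (log (x - ξ) + 1) * u ξ) (Ioc 0 x) :=
      IntegrableOn.mul_continuousOn_of_subset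
        (((intervalIntegrable_iff_integrableOn_Ioc_of_le hx.le).1
          (intervalIntegrable_log_sub x 0 x)).add (integrableOn_const (by simp)))
        hu measurableSet_Ioc isCompact_Icc Ioc_subset_Icc_self
    exact h₁.sub h₂
  have hΨ'_integral : ∫ ξ in Ioc 0 x, Ψ' ξ = 0 := by
    rw [← intervalIntegral.integral_of_le hx.le,
      intervalIntegral.integral_eq_sub_of_hasDerivAt_of_le hx.le
        (((continuous_mul_log.comp (continuous_const.sub continuous_id)).continuousOn).mul hu)
        hΨ ((intervalIntegrable_iff_integrableOn_Ioc_of_le hx.le).2 hΨ'_int)]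
    simp [hu0]
  calc ∫ ξ in Ioc 0 x, (log (x - ξ) * u ξ + u ξ + log (x - ξ) * (ξ * u' ξ))
      = ∫ ξ in Ioc 0 x, (x * (log (x - ξ) * u' ξ) - Ψ' ξ) :=
        setIntegral_congr_fun measurableSet_Ioc fun ξ _ => by simp only [Ψ']; ring
    _ = x * ∫ ξ in Ioc 0 x, log (x - ξ) * u' ξ := by
        rw [integral_sub (hlogu'.const_mul x) hΨ'_int, integral_const_mul, hΨ'_integral,
          sub_zero]

theorem hasDerivAt_mul_log_sub_mul_comp_mul {τ y : ℝ} (hτ : τ ∈ Ioo 0 1) (hy : 0 < y)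
    (hu : HasDerivAt u (u' (y * τ)) (y * τ)) :
    HasDerivAt (fun z => z * (log (z - z * τ) * u (z * τ)))
      (log (y - y * τ) * u (y * τ) + u (y * τ) + log (y - y * τ) * (y * τ * u' (y * τ))) y := by
  have hpos : 0 < y - y * τ := by nlinarith [hτ.2]
  have hscale : HasDerivAt (fun z => z * τ) τ y := by
    simpa using (hasDerivAt_id' (x := y)).mul_const τ
  have hlin : HasDerivAt (fun z => z - z * τ) (1 - τ) y := (hasDerivAt_id' (x := y)).sub hscale
  have hcomp : HasDerivAt (fun z => u (z * τ)) (u' (y * τ) * τ) y := hu.comp y hscale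
  refine ((hasDerivAt_id' (x := y)).fun_mul ((hlin.log hpos.ne').fun_mul hcomp)).congr_deriv ?_
  have hy_mul : y * ((1 - τ) / (y - y * τ)) = 1 := by
    rw [mul_div_assoc', div_eq_one_iff_eq hpos.ne']; ring
  linear_combination u (y * τ) * hy_mul

theorem abs_log_sub_mul_mul_add_le {y τ v w Λ U M : ℝ} (hy : 0 < y) (hτ : τ < 1)
    (hΛ : |log y| ≤ Λ) (hv : |v| ≤ U) (hw : |w| ≤ M) :
    |log (y - y * τ) * v + v + log (y - y * τ) * w| ≤ (Λ + |log (1 - τ)|) * (U + M) + U := by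
  have hlog : |log (y - y * τ)| ≤ Λ + |log (1 - τ)| := by
    rw [show y - y * τ = y * (1 - τ) by ring, log_mul hy.ne' (by linarith)]
    exact (abs_add_le _ _).trans (by gcongr)
  have htri := abs_add_three (log (y - y * τ) * v) v (log (y - y * τ) * w)
  rw [abs_mul, abs_mul] at htri
  calc _ ≤ |log (y - y * τ)| * (|v| + |w|) + |v| := by linarith
    _ ≤ (Λ + |log (1 - τ)|) * (U + M) + U := by
        gcongr
        exact (abs_nonneg _).trans hlog

theorem exists_integrable_bound_log_sub_mul_mul_add {M : ℝ} (hu : ContinuousOn u (Ico 0 b))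
    (hM : ∀ ξ ∈ Ioo 0 b, |ξ * u' ξ| ≤ M) (hx : x ∈ Ioo 0 b) :
    ∃ s ∈ 𝓝 x, s ⊆ Ioo 0 b ∧ ∃ bound : ℝ → ℝ, IntegrableOn bound (Ioo 0 1) ∧
      ∀ τ ∈ Ioo 0 1, ∀ y ∈ s, |log (y - y * τ) * u (y * τ) + u (y * τ)
        + log (y - y * τ) * (y * τ * u' (y * τ))| ≤ bound τ := by
  obtain ⟨hx0, hxb⟩ := hx
  obtain ⟨y₁, hxy₁, hy₁b⟩ := exists_between hxb
  obtain ⟨U, hU⟩ := isCompact_Icc.exists_bound_of_continuousOn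
    (hu.mono (Icc_subset_Ico_right hy₁b))
  obtain ⟨Λ, hΛ⟩ := isCompact_Icc.exists_bound_of_continuousOn
    (continuousOn_log.mono fun y (hy : y ∈ Icc (x / 2) y₁) => ne_of_gt (by linarith [hy.1]))
  have hlog_int : IntegrableOn (fun τ => log (1 - τ)) (Ioo 0 1) :=
    ((intervalIntegrable_iff_integrableOn_Ioc_of_le zero_le_one).1
      (intervalIntegrable_log_sub 1 0 1)).mono_set Ioo_subset_Ioc_self
  refine ⟨Ioo (x / 2) y₁, Ioo_mem_nhds (half_lt_self hx0) hxy₁,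
    Ioo_subset_Ioo (half_pos hx0).le hy₁b.le, fun τ => (Λ + |log (1 - τ)|) * (U + M) + U,
    (((integrable_const Λ).add hlog_int.abs).mul_const (U + M)).add (integrable_const U),
    fun τ hτ y hy => ?_⟩
  have hy0 : 0 < y := by linarith [hy.1]
  have hyτ : y * τ < y := mul_lt_of_lt_one_right hy0 hτ.2
  exact abs_log_sub_mul_mul_add_le hy0 hτ.2 (by simpa using hΛ y ⟨hy.1.le, hy.2.le⟩)
    (by simpa using hU _ ⟨(mul_pos hy0 hτ.1).le, hyτ.le.trans hy.2.le⟩)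
    (hM _ ⟨mul_pos hy0 hτ.1, hyτ.trans (hy.2.trans hy₁b)⟩)

theorem hasDerivAt_integral_Ioo_zero_one_mul_log_sub_mul {M : ℝ} (hu : ContinuousOn u (Ico 0 b))
    (hderiv : ∀ ξ ∈ Ioo 0 b, HasDerivAt u (u' ξ) ξ) (hu'c : ContinuousOn u' (Ioo 0 b))
    (hM : ∀ ξ ∈ Ioo 0 b, |ξ * u' ξ| ≤ M) (hx : x ∈ Ioo 0 b) :
    HasDerivAt (fun y => ∫ τ in Ioo 0 1, y * (log (y - y * τ) * u (y * τ)))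
      (∫ τ in Ioo 0 1, (log (x - x * τ) * u (x * τ) + u (x * τ)
        + log (x - x * τ) * (x * τ * u' (x * τ)))) x := by
  obtain ⟨s, hs, hsb, bound, hbound_int, hbound⟩ :=
    exists_integrable_bound_log_sub_mul_mul_add hu hM hx
  obtain ⟨hx0, hxb⟩ := hx
  have hmaps : ∀ y ∈ Ioo 0 b, MapsTo (fun τ => y * τ) (Ioo 0 1) (Ioo 0 b) := fun y hy τ hτ =>
    ⟨mul_pos hy.1 hτ.1, (mul_lt_of_lt_one_right hy.1 hτ.2).trans hy.2⟩
  have hscaled : ∀ {g : ℝ → ℝ}, ContinuousOn g (Ioo 0 b) → ∀ y ∈ Ioo 0 b,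
      ContinuousOn (fun τ => g (y * τ)) (Ioo 0 1) := fun hg y hy =>
    hg.comp (continuous_const.mul continuous_id).continuousOn (hmaps y hy)
  have hlog : ∀ y, 0 < y → ContinuousOn (fun τ => log (y - y * τ)) (Ioo 0 1) := fun y hy =>
    (by fun_prop : Continuous fun τ => y - y * τ).continuousOn.log fun τ hτ => by nlinarith [hτ.2]
  have huIoo : ContinuousOn u (Ioo 0 b) := fun ξ hξ =>
    (hderiv ξ hξ).continuousAt.continuousWithinAt
  have hF_meas : ∀ᶠ y in 𝓝 x, AEStronglyMeasurable
      (fun τ => y * (log (y - y * τ) * u (y * τ))) (volume.restrict (Ioo 0 1)) := by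
    filter_upwards [Ioo_mem_nhds hx0 hxb] with y hy
    exact (continuousOn_const.mul ((hlog y hy.1).mul (hscaled huIoo y hy))).aestronglyMeasurable
      measurableSet_Ioo
  have hF_int : IntegrableOn (fun τ => x * (log (x - x * τ) * u (x * τ))) (Ioo 0 1) := by
    have hlog_int : IntegrableOn (fun τ => log (x - x * τ)) (Ioc 0 1) := by
      simpa [hx0.ne'] using ((intervalIntegrable_log_sub x 0 x).comp_mul_left (c := x)).1
    refine (IntegrableOn.mul_continuousOn_of_subset (hlog_int.mono_set Ioo_subset_Ioc_self)
      (hu.comp (continuous_const.mul continuous_id).continuousOn fun τ hτ =>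
        ⟨mul_nonneg hx0.le hτ.1, (mul_le_of_le_one_right hx0.le hτ.2).trans_lt hxb⟩)
      measurableSet_Ioo isCompact_Icc Ioo_subset_Icc_self).const_mul x
  have hF'_meas : AEStronglyMeasurable (fun τ => log (x - x * τ) * u (x * τ) + u (x * τ)
      + log (x - x * τ) * (x * τ * u' (x * τ))) (volume.restrict (Ioo 0 1)) :=
    ((((hlog x hx0).mul (hscaled huIoo x ⟨hx0, hxb⟩)).add (hscaled huIoo x ⟨hx0, hxb⟩)).add
      ((hlog x hx0).mul ((continuous_const.mul continuous_id).continuousOn.mul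
        (hscaled hu'c x ⟨hx0, hxb⟩)))).aestronglyMeasurable measurableSet_Ioo
  refine (hasDerivAt_integral_of_dominated_loc_of_deriv_le
    (F' := fun y τ => log (y - y * τ) * u (y * τ) + u (y * τ)
      + log (y - y * τ) * (y * τ * u' (y * τ)))
    hs hF_meas hF_int hF'_meas (ae_restrict_of_forall_mem measurableSet_Ioo fun τ hτ y hy =>
      (Real.norm_eq_abs _).trans_le (hbound τ hτ y hy)) hbound_int
    (ae_restrict_of_forall_mem measurableSet_Ioo fun τ hτ y hy =>
      hasDerivAt_mul_log_sub_mul_comp_mul hτ (hsb hy).1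
        (hderiv _ (hmaps y (hsb hy) hτ)))).2

theorem hasDerivAt_integral_log_sub_mul {M : ℝ} (hu : ContinuousOn u (Ico 0 b)) (hu0 : u 0 = 0)
    (hderiv : ∀ ξ ∈ Ioo 0 b, HasDerivAt u (u' ξ) ξ) (hu'c : ContinuousOn u' (Ioo 0 b))
    (hu'i : IntegrableOn u' (Ioc 0 b)) (hM : ∀ ξ ∈ Ioo 0 b, |ξ * u' ξ| ≤ M) (hx : x ∈ Ioo 0 b) :
    IntegrableOn (fun ξ => log (x - ξ) * u' ξ) (Ioc 0 x) ∧
      HasDerivAt (fun y => ∫ ξ in Ioc 0 y, log (y - ξ) * u ξ)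
        (∫ ξ in Ioc 0 x, log (x - ξ) * u' ξ) x := by
  obtain ⟨hx0, hxb⟩ := hx
  have hu'x : IntegrableOn u' (Ioc 0 x) := hu'i.mono_set (Ioc_subset_Ioc_right hxb.le)
  have hlogu' : IntegrableOn (fun ξ => log (x - ξ) * u' ξ) (Ioc 0 x) :=
    integrableOn_log_sub_mul hx0 hu'x (hu'c.mono fun ξ hξ => ⟨hξ.1, hξ.2.trans_lt hxb⟩)
  refine ⟨hlogu', ?_⟩
  have hrescale : (fun y => ∫ ξ in Ioc 0 y, log (y - ξ) * u ξ) =ᶠ[𝓝 x]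
      fun y => ∫ τ in Ioo 0 1, y * (log (y - y * τ) * u (y * τ)) := by
    filter_upwards [Ioi_mem_nhds hx0] with y hy
    rw [integral_Ioc_zero_eq_mul_integral_Ioo_zero_one _ (le_of_lt hy), ← integral_const_mul]
  have hparts := integral_Ioc_zero_eq_mul_integral_Ioo_zero_one
    (fun ξ => log (x - ξ) * u ξ + u ξ + log (x - ξ) * (ξ * u' ξ)) hx0.le
  rw [integral_log_sub_mul_add_eq hx0 (hu.mono (Icc_subset_Ico_right hxb)) hu0
    (fun ξ hξ => hderiv ξ ⟨hξ.1, hξ.2.trans hxb⟩) hu'x hlogu'] at hparts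
  rw [mul_left_cancel₀ hx0.ne' hparts]
  exact (hasDerivAt_integral_Ioo_zero_one_mul_log_sub_mul hu hderiv hu'c hM ⟨hx0, hxb⟩)
    |>.congr_of_eventuallyEq hrescale

end LogKernel

section NegLogPower

variable {c κ : ℝ}

theorem hasDerivAt_neg_log_mul_rpow (hc : 0 < c) {ξ : ℝ} (hξ : 0 < ξ) (hcξ : c * ξ < 1) :
    HasDerivAt (fun t => (-log (c * t)) ^ (-κ)) (κ * (-log (c * ξ)) ^ (-κ - 1) / ξ) ξ := by
  have hL : 0 < -log (c * ξ) := neg_pos.2 (log_neg (mul_pos hc hξ) hcξ)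
  have hinner : HasDerivAt (fun t => -log (c * t)) (-(c / (c * ξ))) ξ := by
    simpa using (((hasDerivAt_id' (x := ξ)).const_mul c).log (mul_pos hc hξ).ne').fun_neg
  refine (hinner.rpow_const (Or.inl hL.ne')).congr_deriv ?_
  field_simp

theorem tendsto_neg_log_mul_rpow_nhdsGT_zero (hc : 0 < c) (hκ : 0 < κ) :
    Tendsto (fun t => (-log (c * t)) ^ (-κ)) (𝓝[>] 0) (𝓝 0) := by
  have hscale : Tendsto (fun t => c * t) (𝓝[>] 0) (𝓝[>] 0) := by
    refine tendsto_nhdsWithin_iff.2 ⟨?_, eventually_mem_nhdsWithin.mono fun t ht => mul_pos hc ht⟩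
    simpa using ((continuous_const_mul c).tendsto 0).mono_left nhdsWithin_le_nhds
  exact (tendsto_rpow_neg_atTop hκ).comp
    (tendsto_neg_atBot_atTop.comp (tendsto_log_nhdsGT_zero.comp hscale))

theorem continuousAt_neg_log_mul_rpow_div (hc : 0 < c) {ξ : ℝ} (hξ : 0 < ξ) (hcξ : c * ξ < 1) :
    ContinuousAt (fun t => κ * (-log (c * t)) ^ (-κ - 1) / t) ξ :=
  (continuousAt_const.mul ((((continuousAt_log (mul_pos hc hξ).ne').comp
    (continuous_const_mul c).continuousAt).neg).rpow_const
      (Or.inl (neg_pos.2 (log_neg (mul_pos hc hξ) hcξ)).ne'))).div continuousAt_id hξ.ne'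

theorem neg_log_mul_rpow_div_nonneg (hc : 0 < c) (hκ : 0 ≤ κ) {ξ : ℝ} (hξ : 0 < ξ)
    (hcξ : c * ξ < 1) : 0 ≤ κ * (-log (c * ξ)) ^ (-κ - 1) / ξ :=
  div_nonneg (mul_nonneg hκ (rpow_nonneg (neg_pos.2 (log_neg (mul_pos hc hξ) hcξ)).le _)) hξ.le

theorem mul_neg_log_mul_rpow_div_le (hc : 0 < c) (hκ : 0 ≤ κ) {ξ b : ℝ} (hξ : 0 < ξ)
    (hξb : ξ ≤ b) (hcb : c * b < 1) :
    ξ * (κ * (-log (c * ξ)) ^ (-κ - 1) / ξ) ≤ κ * (-log (c * b)) ^ (-κ - 1) := by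
  rw [mul_div_cancel₀ _ hξ.ne']
  refine mul_le_mul_of_nonneg_left (rpow_le_rpow_of_nonpos
    (neg_pos.2 (log_neg (mul_pos hc (hξ.trans_le hξb)) hcb)) ?_ (by linarith)) hκ
  exact neg_le_neg (log_le_log (mul_pos hc hξ) (mul_le_mul_of_nonneg_left hξb hc.le))

theorem continuousOn_Icc_of_eq_neg_log_mul_rpow {u : ℝ → ℝ} {b : ℝ} (hc : 0 < c) (hκ : 0 < κ)
    (hcb : c * b < 1) (hu : ∀ ξ, 0 < ξ → u ξ = (-log (c * ξ)) ^ (-κ)) (hu0 : u 0 = 0) :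
    ContinuousOn u (Icc 0 b) := by
  intro t ht
  rcases eq_or_lt_of_le ht.1 with rfl | ht0
  · have hright : ContinuousWithinAt u (Ioi 0) 0 := by
      rw [ContinuousWithinAt, hu0]
      exact (tendsto_neg_log_mul_rpow_nhdsGT_zero hc hκ).congr'
        (eventually_mem_nhdsWithin.mono fun t ht => (hu t ht).symm)
    exact (continuousWithinAt_Ioi_iff_Ici.1 hright).mono Icc_subset_Ici_self
  · have hct : c * t < 1 := (mul_le_mul_of_nonneg_left ht.2 hc.le).trans_lt hcb
    exact ((hasDerivAt_neg_log_mul_rpow (κ := κ) hc ht0 hct).continuousAt.congr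
      ((eventually_gt_nhds ht0).mono fun ξ hξ => (hu ξ hξ).symm)).continuousWithinAt

end NegLogPower

/-- Differentiability of the logarithmic Volterra transform (Section 5). -/
theorem stmt16 (c κ : ℝ) (hc : c ∈ Set.Ioo (0:ℝ) 1) (hκ : 1 < κ)
    (u u' : ℝ → ℝ)
    (hu : ∀ ξ : ℝ, 0 < ξ → u ξ = (-Real.log (c * ξ)) ^ (-κ)) (hu0 : u 0 = 0)
    (hu' : ∀ ξ : ℝ, 0 < ξ → u' ξ = κ * (-Real.log (c * ξ)) ^ (-κ - 1) / ξ) :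
    ∀ x ∈ Set.Ioc (0:ℝ) 1,
      IntegrableOn (fun ξ : ℝ => Real.log (x - ξ) * u' ξ) (Set.Ioc 0 x) ∧
      HasDerivAt (fun y : ℝ => ∫ ξ in Set.Ioc (0:ℝ) y, Real.log (y - ξ) * u ξ)
        (∫ ξ in Set.Ioc (0:ℝ) x, Real.log (x - ξ) * u' ξ) x := by
  obtain ⟨hc0, hc1⟩ := hc
  have hκ0 : 0 < κ := by linarith
  intro x hx
  obtain ⟨b, hb1, hbc⟩ := exists_between ((one_lt_inv₀ hc0).2 hc1)
  have hcb : c * b < 1 := by simpa [hc0.ne'] using mul_lt_mul_of_pos_left hbc hc0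
  have hcξ : ∀ ξ ∈ Ioo 0 b, c * ξ < 1 := fun ξ hξ =>
    (mul_le_mul_of_nonneg_left hξ.2.le hc0.le).trans_lt hcb
  have hderiv : ∀ ξ ∈ Ioo 0 b, HasDerivAt u (u' ξ) ξ := fun ξ hξ => by
    rw [hu' ξ hξ.1]
    exact (hasDerivAt_neg_log_mul_rpow hc0 hξ.1 (hcξ ξ hξ)).congr_of_eventuallyEq
      ((eventually_gt_nhds hξ.1).mono hu)
  have hu'_nonneg : ∀ ξ ∈ Ioo 0 b, 0 ≤ u' ξ := fun ξ hξ =>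
    hu' ξ hξ.1 ▸ neg_log_mul_rpow_div_nonneg hc0 hκ0.le hξ.1 (hcξ ξ hξ)
  have hcont := continuousOn_Icc_of_eq_neg_log_mul_rpow hc0 hκ0 hcb hu hu0
  refine hasDerivAt_integral_log_sub_mul (M := κ * (-log (c * b)) ^ (-κ - 1))
    (hcont.mono Ico_subset_Icc_self) hu0 hderiv (fun ξ hξ => ?_)
    (intervalIntegral.integrableOn_deriv_of_nonneg hcont hderiv hu'_nonneg) (fun ξ hξ => ?_)
    ⟨hx.1, hx.2.trans_lt hb1⟩
  · exact ((continuousAt_neg_log_mul_rpow_div hc0 hξ.1 (hcξ ξ hξ)).congr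
      ((eventually_gt_nhds hξ.1).mono fun t ht => (hu' t ht).symm)).continuousWithinAt
  · rw [abs_of_nonneg (mul_nonneg hξ.1.le (hu'_nonneg ξ hξ)), hu' ξ hξ.1]
    exact mul_neg_log_mul_rpow_div_le hc0 hκ0.le hξ.1 hξ.2.le hcb
end

section
/- The integration operator is of positive type on continuous functions (Example 2.1 (b), quantitative form): For every α > 0 and every continuous function f : [0,1] → ℝ, there exists a unique continuous function u : [0,1] → ℝ satisfying α u(x) + ∫₀^x u(ξ) dξ = f(x) for all x ∈ [0,1]; moreover, this solution satisfies sup_{x∈[0,1]} |u(x)| ≤ (2/α) sup_{x∈[0,1]} |f(x)|. -/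
open MeasureTheory

/-!
Variation of constants: writing `F = ∫₀ˣ u`, the equation `α u + ∫₀ˣ u = g` becomes the linear
ODE `α F' + F = g` with `F 0 = 0`, whose solution is
`F x = α⁻¹ e^{-x/α} ∫₀ˣ e^{t/α} g t dt`. If `|g| ≤ M` this gives `|F x| ≤ (1 - e^{-x/α}) M ≤ M`,
so `u = (g - F) / α` is bounded by `2M / α`. Uniqueness: for the difference `w` of two solutions,
`W = ∫₀ˣ w` solves `α W' + W = 0`, `W 0 = 0`, so `e^{x/α} W` is constant, hence zero.
-/

open Set Real intervalIntegral

theorem ContinuousOn.exists_continuous_eqOn_Icc {X Y : Type*} [LinearOrder X] [TopologicalSpace X]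
    [OrderTopology X] [TopologicalSpace Y] {a b : X} (hab : a ≤ b) {f : X → Y}
    (hf : ContinuousOn f (Icc a b)) : ∃ g : X → Y, Continuous g ∧ EqOn g f (Icc a b) :=
  ⟨IccExtend hab ((Icc a b).domRestrict f), hf.domRestrict.Icc_extend',
    fun _ hx => IccExtend_of_mem hab _ hx⟩

theorem setIntegral_Ioc_eq_integral_of_eqOn {E : Type*} [NormedAddCommGroup E] [NormedSpace ℝ E]
    {f g : ℝ → E} {a b x : ℝ} (hfg : EqOn f g (Icc a b)) (hx : x ∈ Icc a b) :
    ∫ t in Ioc a x, g t = ∫ t in a..x, f t := by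
  rw [integral_of_le hx.1]
  exact setIntegral_congr_fun measurableSet_Ioc fun t ht => (hfg ⟨ht.1.le, ht.2.trans hx.2⟩).symm

noncomputable def volterraPrimitive (α : ℝ) (g : ℝ → ℝ) (x : ℝ) : ℝ :=
  exp (-x / α) / α * ∫ t in (0:ℝ)..x, exp (t / α) * g t

noncomputable def volterraSolution (α : ℝ) (g : ℝ → ℝ) (x : ℝ) : ℝ :=
  (g x - volterraPrimitive α g x) / α

variable {α : ℝ} {g : ℝ → ℝ}

theorem hasDerivAt_volterraPrimitive (hα : α ≠ 0) (hg : Continuous g) (x : ℝ) :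
    HasDerivAt (volterraPrimitive α g) (volterraSolution α g x) x := by
  have hH : HasDerivAt (fun x => ∫ t in (0:ℝ)..x, exp (t / α) * g t) (exp (x / α) * g x) x :=
    ((by fun_prop : Continuous fun t => exp (t / α) * g t).integral_hasStrictDerivAt 0 x).hasDerivAt
  have hE := (((hasDerivAt_neg x).div_const α).exp).div_const α
  refine (hE.mul hH).congr_deriv ?_
  have hexp : exp (-(x / α)) * exp (x / α) = 1 := by rw [← exp_add, neg_add_cancel, exp_zero]
  simp only [volterraSolution, volterraPrimitive, neg_div]
  field_simp
  linear_combination (α * g x) * hexp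

theorem continuous_volterraSolution (hα : α ≠ 0) (hg : Continuous g) :
    Continuous (volterraSolution α g) :=
  (hg.sub (continuous_iff_continuousAt.2 fun x =>
    (hasDerivAt_volterraPrimitive hα hg x).continuousAt)).div_const α

theorem integral_volterraSolution (hα : α ≠ 0) (hg : Continuous g) (x : ℝ) :
    ∫ t in (0:ℝ)..x, volterraSolution α g t = volterraPrimitive α g x := by
  rw [integral_eq_sub_of_hasDerivAt (fun t _ => hasDerivAt_volterraPrimitive hα hg t)
    ((continuous_volterraSolution hα hg).intervalIntegrable 0 x)]
  simp [volterraPrimitive]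

theorem volterraSolution_add_integral (hα : α ≠ 0) (hg : Continuous g) (x : ℝ) :
    α * volterraSolution α g x + ∫ t in (0:ℝ)..x, volterraSolution α g t = g x := by
  rw [integral_volterraSolution hα hg, volterraSolution]
  field_simp
  ring

theorem abs_volterraPrimitive_le (hα : 0 < α) {x M : ℝ} (hx : 0 ≤ x)
    (hM : ∀ t ∈ Icc 0 x, |g t| ≤ M) : |volterraPrimitive α g x| ≤ M := by
  have hM0 : 0 ≤ M := (abs_nonneg _).trans (hM 0 ⟨le_rfl, hx⟩)
  have hint : |∫ t in (0:ℝ)..x, exp (t / α) * g t| ≤ α * (exp (x / α) - 1) * M :=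
    calc |∫ t in (0:ℝ)..x, exp (t / α) * g t|
        ≤ ∫ t in (0:ℝ)..x, exp (t / α) * M := by
          rw [← Real.norm_eq_abs]
          refine norm_integral_le_of_norm_le hx (ae_of_all _ fun t ht => ?_)
            ((by fun_prop : Continuous fun t => exp (t / α) * M).intervalIntegrable _ _)
          rw [Real.norm_eq_abs, abs_mul, abs_of_pos (exp_pos _)]
          exact mul_le_mul_of_nonneg_left (hM t (Ioc_subset_Icc_self ht)) (exp_pos _).le
      _ = α * (exp (x / α) - 1) * M := by
          rw [intervalIntegral.integral_mul_const, integral_comp_div (fun t => exp t) hα.ne',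
            integral_exp]
          simp
  have hexp : exp (-(x / α)) * exp (x / α) = 1 := by rw [← exp_add, neg_add_cancel, exp_zero]
  calc |volterraPrimitive α g x|
      = exp (-x / α) / α * |∫ t in (0:ℝ)..x, exp (t / α) * g t| := by
        rw [volterraPrimitive, abs_mul, abs_of_pos (by positivity)]
    _ ≤ exp (-x / α) / α * (α * (exp (x / α) - 1) * M) := by gcongr
    _ = (1 - exp (-x / α)) * M := by rw [neg_div]; field_simp; linear_combination M * hexp
    _ ≤ M := by nlinarith [exp_pos (-x / α)]

theorem abs_volterraSolution_le (hα : 0 < α) {x M : ℝ} (hx : 0 ≤ x)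
    (hM : ∀ t ∈ Icc 0 x, |g t| ≤ M) : |volterraSolution α g x| ≤ 2 / α * M :=
  calc |volterraSolution α g x| ≤ (|g x| + |volterraPrimitive α g x|) / α := by
        rw [volterraSolution, abs_div, abs_of_pos hα]
        gcongr
        exact abs_sub _ _
    _ ≤ (M + M) / α := by
        gcongr
        exacts [hM x ⟨hx, le_rfl⟩, abs_volterraPrimitive_le hα hx hM]
    _ = 2 / α * M := by ring

theorem eqOn_of_mul_add_integral_eq (hα : α ≠ 0) {u v : ℝ → ℝ} {b : ℝ}
    (hu : Continuous u) (hv : Continuous v)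
    (h : ∀ x ∈ Icc 0 b, α * u x + ∫ t in (0:ℝ)..x, u t = α * v x + ∫ t in (0:ℝ)..x, v t) :
    EqOn u v (Icc 0 b) := by
  set W : ℝ → ℝ := fun x => ∫ t in (0:ℝ)..x, (u t - v t)
  have hW : ∀ x, HasDerivAt W (u x - v x) x := fun x =>
    ((hu.sub hv).integral_hasStrictDerivAt 0 x).hasDerivAt
  have hODE : ∀ x ∈ Icc 0 b, α * (u x - v x) + W x = 0 := fun x hx => by
    simp only [W]
    rw [integral_sub (hu.intervalIntegrable _ _) (hv.intervalIntegrable _ _)]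
    linarith [h x hx]
  have hG : ∀ x ∈ Ico 0 b, HasDerivWithinAt (fun x => exp (x / α) * W x) 0 (Ici x) x := by
    intro x hx
    refine ((((hasDerivAt_id x).div_const α).exp).mul (hW x)).hasDerivWithinAt.congr_deriv ?_
    simp only [id]
    field_simp
    linear_combination exp (x / α) * hODE x (Ico_subset_Icc_self hx)
  have hGcont : ContinuousOn (fun x => exp (x / α) * W x) (Icc 0 b) :=
    ((continuous_exp.comp (continuous_id.div_const α)).mul
      (continuous_iff_continuousAt.2 fun x => (hW x).continuousAt)).continuousOn
  intro x hx
  have hWx : W x = 0 := by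
    simpa [W, (exp_pos _).ne'] using constant_of_has_deriv_right_zero hGcont hG x hx
  have := hODE x hx
  rw [hWx, add_zero, mul_eq_zero] at this
  exact sub_eq_zero.1 (this.resolve_left hα)

/-- The integration operator is of positive type on continuous functions
(Example 2.1 (b), quantitative form). -/
theorem stmt19 (α : ℝ) (hα : 0 < α) (f : ℝ → ℝ)
    (hf : ContinuousOn f (Set.Icc 0 1)) :
    ∃ u : ℝ → ℝ, ContinuousOn u (Set.Icc 0 1) ∧
      (∀ x ∈ Set.Icc (0:ℝ) 1, α * u x + ∫ ξ in Set.Ioc (0:ℝ) x, u ξ = f x) ∧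
      (∀ v : ℝ → ℝ, ContinuousOn v (Set.Icc 0 1) →
        (∀ x ∈ Set.Icc (0:ℝ) 1, α * v x + ∫ ξ in Set.Ioc (0:ℝ) x, v ξ = f x) →
        ∀ x ∈ Set.Icc (0:ℝ) 1, v x = u x) ∧
      ∀ x ∈ Set.Icc (0:ℝ) 1,
        |u x| ≤ (2 / α) * sSup ((fun y => |f y|) '' Set.Icc (0:ℝ) 1) := by
  obtain ⟨g, hg, hgf⟩ := hf.exists_continuous_eqOn_Icc zero_le_one
  set u := volterraSolution α g
  have hu := continuous_volterraSolution hα.ne' hg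
  have hu_eq : ∀ x ∈ Icc (0:ℝ) 1, α * u x + ∫ t in (0:ℝ)..x, u t = f x := fun x hx =>
    (volterraSolution_add_integral hα.ne' hg x).trans (hgf hx)
  refine ⟨u, hu.continuousOn, fun x hx => ?_, fun v hv hvf x hx => ?_, fun x hx => ?_⟩
  · rw [setIntegral_Ioc_eq_integral_of_eqOn (eqOn_refl _ _) hx, hu_eq x hx]
  · obtain ⟨v', hv', hv'v⟩ := hv.exists_continuous_eqOn_Icc zero_le_one
    rw [← hv'v hx]
    refine eqOn_of_mul_add_integral_eq hα.ne' hv' hu (fun y hy => ?_) hx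
    rw [hu_eq y hy, ← setIntegral_Ioc_eq_integral_of_eqOn hv'v hy, hv'v hy, hvf y hy]
  · have hbdd := (isCompact_Icc.image_of_continuousOn hf.abs).bddAbove
    refine abs_volterraSolution_le hα hx.1 fun t ht => ?_
    have ht' : t ∈ Icc (0:ℝ) 1 := ⟨ht.1, ht.2.trans hx.2⟩
    rw [hgf ht']
    exact le_csSup hbdd (mem_image_of_mem _ ht')
end
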